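/- arXiv:2212.02118 — 10 statements merged into one kernel-verified Lean document; each statement's English description precedes it below -/
import Mathlib

section
/- For every natural number n, the Fibonacci number F_n satisfies F_n = ∑_{j∈ℤ} (−1)^j C(n, ⌊(n+5j+2)/2⌋), where the sum has only finitely many nonzero terms. -/
/-- Binomial coefficient `C(a, r)` with integer lower index, equal to `0` for `r < 0`. -/
noncomputable def Cz (a : ℕ) (r : ℤ) : ℝ :=
  if 0 ≤ r then (a.choose r.toNat : ℝ) else 0

lemma Cz_ne_zero {n : ℕ} {r : ℤ} (h : Cz n r ≠ 0) : 0 ≤ r ∧ r ≤ n := by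
  unfold Cz at h
  split_ifs at h with h0
  · refine ⟨h0, ?_⟩
    by_contra hlt
    push_neg at hlt
    have : (n : ℤ) < r.toNat := by omega
    have : n < r.toNat := by exact_mod_cast this
    simp [Nat.choose_eq_zero_of_lt this] at h
  · exact absurd rfl h

lemma Cz_pascal (n : ℕ) (r : ℤ) : Cz (n+1) r = Cz n r + Cz n (r-1) := by
  unfold Cz
  rcases lt_trichotomy r 0 with h | h | h
  · rw [if_neg (by omega), if_neg (by omega), if_neg (by omega)]; ring
  · subst h; norm_num
  · rw [if_pos (by omega), if_pos (by omega), if_pos (by omega)]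
    obtain ⟨m, hm⟩ : ∃ m : ℕ, r.toNat = m + 1 := ⟨r.toNat - 1, by omega⟩
    have h2 : (r - 1).toNat = m := by omega
    rw [hm, h2, Nat.choose_succ_succ]
    push_cast; ring

lemma Cz_symm (n : ℕ) (r : ℤ) : Cz n r = Cz n ((n : ℤ) - r) := by
  unfold Cz
  rcases lt_trichotomy r 0 with h | h | h
  · rw [if_neg (by omega), if_pos (by omega)]
    have : n < ((n : ℤ) - r).toNat := by omega
    simp [Nat.choose_eq_zero_of_lt this]
  · subst h; simp
  · rcases le_or_gt r n with hr | hr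
    · rw [if_pos (by omega), if_pos (by omega)]
      have h1 : r.toNat ≤ n := by omega
      have h2 : ((n : ℤ) - r).toNat = n - r.toNat := by omega
      rw [h2, Nat.choose_symm h1]
    · rw [if_pos (by omega), if_neg (by omega)]
      have : n < r.toNat := by omega
      simp [Nat.choose_eq_zero_of_lt this]

noncomputable def g (t : ℤ) (n : ℕ) (j : ℤ) : ℝ :=
  (-1 : ℝ) ^ j * Cz n (((n : ℤ) + 5 * j + t) / 2)

noncomputable def S (t : ℤ) (n : ℕ) : ℝ := ∑ᶠ j : ℤ, g t n j

lemma g_support (t : ℤ) (n : ℕ) : (Function.support (g t n)).Finite := by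
  apply Set.Finite.subset (Set.finite_Icc (-((n : ℤ) + |t| + 1)) ((n : ℤ) + |t| + 1))
  intro j hj
  have hC : Cz n (((n : ℤ) + 5 * j + t) / 2) ≠ 0 := by
    intro h; apply hj; unfold g; rw [h]; ring
  obtain ⟨h1, h2⟩ := Cz_ne_zero hC
  have ht1 := le_abs_self t
  have ht2 := neg_abs_le t
  simp only [Set.mem_Icc]
  omega

lemma neg_one_zpow_neg (j : ℤ) : (-1 : ℝ) ^ (-j) = (-1 : ℝ) ^ j := by
  rw [zpow_neg, ← inv_zpow, inv_neg_one]

lemma S_symm (t : ℤ) (n : ℕ) : S t n = S (1 - t) n := by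
  unfold S
  rw [← finsum_comp_equiv (Equiv.neg ℤ) (f := g t n)]
  apply finsum_congr
  intro j
  unfold g
  simp only [Equiv.neg_apply]
  rw [neg_one_zpow_neg]
  congr 1
  rw [Cz_symm n (((n : ℤ) + 5 * j + (1 - t)) / 2)]
  congr 1
  omega

lemma S_shift (t : ℤ) (n : ℕ) : S (t + 5) n = - S t n := by
  unfold S
  rw [← finsum_comp_equiv (Equiv.addRight (1 : ℤ)) (f := g t n), ← finsum_neg_distrib]
  apply finsum_congr
  intro j
  unfold g
  simp only [Equiv.coe_addRight]
  rw [zpow_add₀ (by norm_num : (-1:ℝ) ≠ 0)]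
  have : ((n : ℤ) + 5 * (j + 1) + t) / 2 = ((n : ℤ) + 5 * j + (t + 5)) / 2 := by omega
  rw [this]
  ring

lemma S_pascal (t : ℤ) (n : ℕ) : S t (n + 1) = S (t + 1) n + S (t - 1) n := by
  unfold S
  rw [← finsum_add_distrib (g_support (t+1) n) (g_support (t-1) n)]
  apply finsum_congr
  intro j
  unfold g
  have h1 : ((n : ℤ) + 1 + 5 * j + t) / 2 = ((n : ℤ) + 5 * j + (t + 1)) / 2 := by omega
  have h2 : ((n : ℤ) + 5 * j + (t + 1)) / 2 - 1 = ((n : ℤ) + 5 * j + (t - 1)) / 2 := by omega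
  push_cast
  rw [h1, Cz_pascal, h2]
  ring

lemma Cz_eq_zero {n : ℕ} {r : ℤ} (h : r < 0 ∨ (n : ℤ) < r) : Cz n r = 0 := by
  unfold Cz
  split_ifs with h0
  · have : n < r.toNat := by omega
    simp [Nat.choose_eq_zero_of_lt this]
  · rfl

lemma S3_eq_zero (n : ℕ) : S 3 n = 0 := by
  have h1 : S 3 n = S (-2) n := by have := S_symm 3 n; norm_num at this; exact this
  have h2 : S (-2 + 5) n = - S (-2) n := S_shift (-2) n
  norm_num at h2
  linarith [h1, h2]

lemma S_two_zero : S 2 0 = 0 := by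
  unfold S
  apply finsum_eq_zero_of_forall_eq_zero
  intro j
  unfold g
  rw [Cz_eq_zero]
  · ring
  · push_cast; omega

lemma S_two_one : S 2 1 = 1 := by
  unfold S
  rw [finsum_eq_single _ (0 : ℤ)]
  · unfold g Cz
    norm_num
  · intro j hj
    unfold g
    rw [Cz_eq_zero]
    · ring
    · push_cast; omega

lemma S_main : ∀ n : ℕ, S 2 n = Nat.fib n ∧ S 2 (n + 1) = Nat.fib (n + 1) := by
  intro n
  induction n with
  | zero => exact ⟨by simpa using S_two_zero, by simpa using S_two_one⟩
  | succ m ih =>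
    obtain ⟨h1, h2⟩ := ih
    refine ⟨h2, ?_⟩
    have hp : S 2 (m + 1 + 1) = S 3 (m + 1) + S 1 (m + 1) := by
      have := S_pascal 2 (m + 1); norm_num at this; convert this using 2
    have hp1 : S 1 (m + 1) = S 2 m + S 0 m := by
      have := S_pascal 1 m; norm_num at this; convert this using 2
    have h01 : S 0 m = S 1 m := by have := S_symm 0 m; norm_num at this; exact this
    have h12 : S 2 (m + 1) = S 3 m + S 1 m := by
      have := S_pascal 2 m; norm_num at this; convert this using 2
    rw [hp, S3_eq_zero, hp1, h01, zero_add]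
    have hS1m : S 1 m = S 2 (m + 1) := by rw [h12, S3_eq_zero, zero_add]
    rw [hS1m, h1, h2, Nat.fib_add_two]
    push_cast
    ring

theorem stmt1 (n : ℕ) :
    (Nat.fib n : ℝ) = ∑ᶠ j : ℤ, (-1 : ℝ) ^ j * Cz n (((n : ℤ) + 5 * j + 2).fdiv 2) := by
  have h := (S_main n).1
  rw [← h]
  unfold S
  apply finsum_congr
  intro j
  unfold g
  rw [Int.fdiv_eq_ediv_of_nonneg _ (by norm_num)]
end

section
/- Let m ≥ 1 and k ≥ 1 be integers and let ω ∈ ℂ be a primitive m-th root of unity. Define b_1, …, b_m ∈ ℂ as the coefficients of the polynomial ∏_{j=1}^{m} (z − ω^{−kj}(ω^j − 1)) = ∑_{j=1}^{m} b_j z^j (the constant coefficient is 0). Then for every x ∈ ℂ, (−1)^{k(m−1)} · ∑_{j=1}^{m} b_j · x^j · (1+x)^{r_j} = (x+1)^m − 1, where r_j denotes the least nonnegative residue of −kj modulo m. -/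
/-!
Put `A(y) = ∑ b_j x^j y^{r_j}`, a polynomial of degree `< m` in `y`. At an `m`-th root of unity
`η` we have `η^{r_j} = (η^{-k})^j`, so `A(η) = P(x η^{-k})` where
`P(X) = ∏_ζ (X - ζ^{-k}(ζ - 1))`, the product running over all `m`-th roots of unity.
Substituting `ζ = ξη` turns this into `c · M(η)` with `M(y) = ∏_ξ (y - ξ⁻¹(1 + x ξ^k))` monic of
degree `m` and `c = ∏_ξ (-ξ^{1-k}) = -(-1)^{k(m+1)}`. Both `A` and `c (M - (y^m - 1))` have degree
`< m` and agree at the `m` roots of unity, hence coincide; at `y = 1 + x` the factor `ξ = 1` of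
`M` vanishes, which leaves `A(1 + x) = (-1)^{k(m+1)} ((1 + x)^m - 1)`.
-/

open Finset Polynomial

lemma zpow_emod_toNat_of_pow_eq_one {G : Type*} [GroupWithZero G] {ζ : G} {m : ℕ} (hm : 0 < m)
    (hζ : ζ ^ m = 1) (a : ℤ) :
    ζ ^ (a % (m : ℤ)).toNat = ζ ^ a := by
  have hζ0 : ζ ≠ 0 := by rintro rfl; simp [zero_pow hm.ne'] at hζ
  rw [← zpow_natCast, Int.toNat_of_nonneg (Int.emod_nonneg _ (by omega))]
  conv_rhs => rw [← Int.emod_add_mul_ediv a m, zpow_add₀ hζ0, zpow_mul, zpow_natCast, hζ,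
    one_zpow, mul_one]

lemma zpow_neg_natCast_mul {G : Type*} [DivisionMonoid G] (ζ : G) (k j : ℕ) :
    ζ ^ (-(k * j : ℤ)) = ((ζ ^ k)⁻¹) ^ j := by
  rw [zpow_neg, ← Nat.cast_mul, zpow_natCast, pow_mul, inv_pow]

lemma emod_toNat_lt (a : ℤ) {m : ℕ} (hm : 0 < m) : (a % (m : ℤ)).toNat < m := by
  have hlt := Int.emod_lt_of_pos a (by exact_mod_cast hm : (0 : ℤ) < m)
  have hnn := Int.emod_nonneg a (by exact_mod_cast hm.ne' : (m : ℤ) ≠ 0)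
  omega

lemma degree_sum_C_mul_X_pow_lt {R ι : Type*} [Semiring R] (s : Finset ι) (a : ι → R) {e : ι → ℕ}
    {m : ℕ} (he : ∀ i ∈ s, e i < m) :
    (∑ i ∈ s, C (a i) * X ^ e i).degree < (m : WithBot ℕ) := by
  rw [← mem_degreeLT]
  exact Submodule.sum_mem _ fun i hi => mem_degreeLT.2
    ((degree_C_mul_X_pow_le _ _).trans_lt (by exact_mod_cast he i hi))

section

variable {K : Type*} [Field K] {m : ℕ}

lemma IsPrimitiveRoot.prod_Icc_pow_eq_prod_nthRootsFinset {M : Type*} [CommMonoid M] {ω : K}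
    (hω : IsPrimitiveRoot ω m) (f : K → M) :
    ∏ j ∈ Icc 1 m, f (ω ^ j) = ∏ ζ ∈ nthRootsFinset m (1 : K), f ζ := by
  rcases Nat.eq_zero_or_pos m with rfl | hm
  · simp
  refine prod_nbij (ω ^ ·) (fun j _ => ?_) (fun i hi j hj hij => ?_) (fun ζ hζ => ?_)
    fun _ _ => rfl
  · rw [Polynomial.mem_nthRootsFinset hm, ← pow_mul, mul_comm, pow_mul, hω.pow_eq_one, one_pow]
  · have hdvd : (m : ℤ) ∣ (i : ℤ) - j := by
      rw [← hω.zpow_eq_one_iff_dvd, zpow_sub₀ (hω.ne_zero hm.ne'), zpow_natCast, zpow_natCast,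
        show ω ^ i = ω ^ j from hij, div_self (pow_ne_zero _ (hω.ne_zero hm.ne'))]
    simp only [coe_Icc, Set.mem_Icc] at hi hj
    have hij0 := Int.eq_zero_of_abs_lt_dvd hdvd (by rw [abs_lt]; omega)
    omega
  · have : NeZero m := ⟨hm.ne'⟩
    obtain ⟨i, hi, rfl⟩ := hω.eq_pow_of_pow_eq_one ((Polynomial.mem_nthRootsFinset hm 1).1 hζ)
    rcases Nat.eq_zero_or_pos i with rfl | hi0
    · exact ⟨m, by simpa using Nat.one_le_of_lt hm, by simp [hω.pow_eq_one]⟩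
    · exact ⟨i, by simp only [coe_Icc, Set.mem_Icc]; omega, rfl⟩

lemma prod_nthRootsFinset_comp_mul_right {M : Type*} [CommMonoid M] {η : K}
    (hη : η ∈ nthRootsFinset m (1 : K)) (f : K → M) :
    ∏ ξ ∈ nthRootsFinset m (1 : K), f (ξ * η) = ∏ ζ ∈ nthRootsFinset m (1 : K), f ζ := by
  have hm : 0 < m := Nat.pos_of_ne_zero (by rintro rfl; simp at hη)
  have hη0 : η ≠ 0 := ne_zero_of_mem_nthRootsFinset one_ne_zero hη
  have hη' : η⁻¹ ∈ nthRootsFinset m (1 : K) := by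
    rw [mem_nthRootsFinset hm] at hη ⊢
    rw [inv_pow, hη, inv_one]
  refine prod_nbij' (· * η) (· * η⁻¹) (fun ξ hξ => by simpa using mul_mem_nthRootsFinset hξ hη)
    (fun ζ hζ => by simpa using mul_mem_nthRootsFinset hζ hη') (fun ξ _ => by field_simp)
    (fun ζ _ => by field_simp) fun _ _ => rfl

lemma IsPrimitiveRoot.prod_nthRootsFinset {ω : K} (hω : IsPrimitiveRoot ω m) (hm : 0 < m) :
    ∏ ζ ∈ nthRootsFinset m (1 : K), ζ = (-1) ^ (m + 1) := by
  have h := hω.pow_sub_pow_eq_prod_sub_mul 0 1 hm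
  simp only [zero_pow hm.ne', one_pow, zero_sub, mul_one] at h
  rw [prod_neg, hω.card_nthRootsFinset] at h
  have hsq : ((-1 : K) ^ m) ^ 2 = 1 := by rw [← pow_mul, pow_mul']; simp
  linear_combination (-(-1 : K) ^ m) * h - (∏ ζ ∈ nthRootsFinset m (1 : K), ζ) * hsq

lemma IsPrimitiveRoot.prod_nthRootsFinset_neg_mul_inv_pow {ω : K} (hω : IsPrimitiveRoot ω m)
    (hm : 0 < m) (k : ℕ) :
    ∏ ξ ∈ nthRootsFinset m (1 : K), (-ξ * (ξ ^ k)⁻¹) = -(-1) ^ (k * (m + 1)) := by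
  rw [prod_mul_distrib, prod_neg, prod_inv_distrib, prod_pow, hω.prod_nthRootsFinset hm,
    hω.card_nthRootsFinset, ← pow_mul, mul_comm (m + 1), ← inv_pow, inv_neg_one,
    ← pow_add, Odd.neg_one_pow ⟨m, by ring⟩]
  exact neg_one_mul _

lemma IsPrimitiveRoot.prod_sub_inv_pow_mul_sub_one_eq {ω : K} (hω : IsPrimitiveRoot ω m) (k : ℕ)
    (x : K) {η : K} (hη : η ∈ nthRootsFinset m (1 : K)) :
    ∏ ζ ∈ nthRootsFinset m (1 : K), (x * (η ^ k)⁻¹ - (ζ ^ k)⁻¹ * (ζ - 1)) =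
      (∏ ξ ∈ nthRootsFinset m (1 : K), (-ξ * (ξ ^ k)⁻¹)) *
        ∏ ξ ∈ nthRootsFinset m (1 : K), (η - ξ⁻¹ * (1 + x * ξ ^ k)) := by
  have hη0 : η ≠ 0 := ne_zero_of_mem_nthRootsFinset one_ne_zero hη
  have hm : 0 < m := Nat.pos_of_ne_zero (by rintro rfl; simp at hη)
  have hηk : ((η ^ k)⁻¹) ^ m = 1 := by
    rw [inv_pow, ← pow_mul, mul_comm, pow_mul, (Polynomial.mem_nthRootsFinset hm 1).1 hη, one_pow,
      inv_one]
  rw [← prod_nthRootsFinset_comp_mul_right hη, ← prod_mul_distrib]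
  calc ∏ ξ ∈ nthRootsFinset m (1 : K), (x * (η ^ k)⁻¹ - ((ξ * η) ^ k)⁻¹ * (ξ * η - 1))
      = ∏ ξ ∈ nthRootsFinset m (1 : K),
          ((η ^ k)⁻¹ * ((-ξ * (ξ ^ k)⁻¹) * (η - ξ⁻¹ * (1 + x * ξ ^ k)))) := by
        refine prod_congr rfl fun ξ hξ => ?_
        have hξ0 : ξ ≠ 0 := ne_zero_of_mem_nthRootsFinset one_ne_zero hξ
        field_simp
        ring
    _ = _ := by rw [prod_mul_distrib, prod_const, hω.card_nthRootsFinset, hηk, one_mul]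

lemma IsPrimitiveRoot.eval_eq_mul_sub_of_eval_nthRootsFinset {ω : K} (hω : IsPrimitiveRoot ω m)
    (hm : 0 < m) {p q : K[X]} (hp : p.degree < (m : WithBot ℕ)) (hq : q.Monic)
    (hqm : q.natDegree = m) (c : K)
    (h : ∀ η ∈ nthRootsFinset m (1 : K), p.eval η = c * q.eval η) (y : K) :
    p.eval y = c * (q.eval y - (y ^ m - 1)) := by
  have hX : (X ^ m - 1 : K[X]).degree = (m : WithBot ℕ) := by
    simpa using degree_X_pow_sub_C hm (1 : K)
  have hqX : (q - (X ^ m - 1)).degree < (m : WithBot ℕ) := by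
    have := degree_sub_lt_left (by rw [hX, degree_eq_natDegree hq.ne_zero, hqm]) hq.ne_zero
      (by rw [hq.leadingCoeff, leadingCoeff_X_pow_sub_one hm])
    rwa [degree_eq_natDegree hq.ne_zero, hqm] at this
  have hpq : p = c • (q - (X ^ m - 1)) := by
    refine eq_of_degrees_lt_of_eval_finset_eq (nthRootsFinset m (1 : K)) ?_ ?_ fun η hη => ?_
    · rwa [hω.card_nthRootsFinset]
    · rw [hω.card_nthRootsFinset]
      exact (degree_smul_le _ _).trans_lt hqX
    · simp [h η hη, (Polynomial.mem_nthRootsFinset hm 1).1 hη]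
  simp [hpq]

lemma IsPrimitiveRoot.sum_mul_mul_pow_emod_eq {ω : K} (hω : IsPrimitiveRoot ω m) (hm : 0 < m)
    (k : ℕ) (b : ℕ → K)
    (hb : ∀ X : K, ∏ ζ ∈ nthRootsFinset m (1 : K), (X - (ζ ^ k)⁻¹ * (ζ - 1)) =
      ∑ j ∈ Icc 1 m, b j * X ^ j) (x : K) :
    ∑ j ∈ Icc 1 m, b j * x ^ j * (1 + x) ^ ((-(k * j : ℤ)) % (m : ℤ)).toNat =
      (-1) ^ (k * (m + 1)) * ((1 + x) ^ m - 1) := by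
  have hroot : ∀ η ∈ nthRootsFinset m (1 : K),
      (∑ j ∈ Icc 1 m, C (b j * x ^ j) * X ^ ((-(k * j : ℤ)) % (m : ℤ)).toNat).eval η =
        (∏ ξ ∈ nthRootsFinset m (1 : K), (-ξ * (ξ ^ k)⁻¹)) *
          (∏ ξ ∈ nthRootsFinset m (1 : K), (X - C (ξ⁻¹ * (1 + x * ξ ^ k)))).eval η := by
    intro η hη
    simp only [eval_finsetSum, eval_prod, eval_mul, eval_C, eval_pow, eval_X, eval_sub,
      zpow_emod_toNat_of_pow_eq_one hm ((Polynomial.mem_nthRootsFinset hm 1).1 hη),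
      zpow_neg_natCast_mul]
    rw [← hω.prod_sub_inv_pow_mul_sub_one_eq k x hη, hb]
    exact sum_congr rfl fun j _ => by ring
  have key := hω.eval_eq_mul_sub_of_eval_nthRootsFinset hm
    (degree_sum_C_mul_X_pow_lt _ _ fun j _ => emod_toNat_lt _ hm) (monic_prod_X_sub_C _ _)
    (by rw [natDegree_finsetProd_X_sub_C_eq_card, hω.card_nthRootsFinset]) _ hroot (1 + x)
  rw [hω.prod_nthRootsFinset_neg_mul_inv_pow hm, eval_prod,
    prod_eq_zero (one_mem_nthRootsFinset hm) (by simp)] at key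
  simp only [eval_finsetSum, eval_mul, eval_C, eval_pow, eval_X] at key
  rw [key]
  ring

end

theorem stmt5_general (m k : ℕ) (hm : 1 ≤ m) (ω : ℂ) (hω : IsPrimitiveRoot ω m)
    (b : ℕ → ℂ)
    (hb : ∀ X : ℂ, ∏ j ∈ Finset.Icc 1 m, (X - ω ^ (-(k * j : ℤ)) * (ω ^ j - 1))
        = ∑ j ∈ Finset.Icc 1 m, b j * X ^ j)
    (x : ℂ) :
    (-1 : ℂ) ^ (k * (m - 1)) * ∑ j ∈ Finset.Icc 1 m,
        b j * x ^ j * (1 + x) ^ ((-(k * j : ℤ)) % (m : ℤ)).toNat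
      = (x + 1) ^ m - 1 := by
  have hP : ∀ X : ℂ, ∏ ζ ∈ nthRootsFinset m (1 : ℂ), (X - (ζ ^ k)⁻¹ * (ζ - 1)) =
      ∑ j ∈ Icc 1 m, b j * X ^ j := fun X => by
    rw [← hω.prod_Icc_pow_eq_prod_nthRootsFinset, ← hb]
    simp only [zpow_neg_natCast_mul, ← inv_pow, pow_right_comm]
  obtain ⟨n, rfl⟩ := Nat.exists_eq_add_of_le hm
  have hsign : (-1 : ℂ) ^ (k * (1 + n - 1)) * (-1) ^ (k * (1 + n + 1)) = 1 := by
    rw [← pow_add, Even.neg_one_pow ⟨k * (n + 1), by rw [Nat.add_sub_cancel_left]; ring⟩]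
  rw [hω.sum_mul_mul_pow_emod_eq hm k b hP, ← mul_assoc, hsign, one_mul, add_comm]

theorem stmt5 (m k : ℕ) (hm : 1 ≤ m) (hk : 1 ≤ k) (ω : ℂ) (hω : IsPrimitiveRoot ω m)
    (b : ℕ → ℂ)
    (hb : ∀ X : ℂ, ∏ j ∈ Finset.Icc 1 m, (X - ω ^ (-(k * j : ℤ)) * (ω ^ j - 1))
        = ∑ j ∈ Finset.Icc 1 m, b j * X ^ j)
    (x : ℂ) :
    (-1 : ℂ) ^ (k * (m - 1)) * ∑ j ∈ Finset.Icc 1 m,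
        b j * x ^ j * (1 + x) ^ ((-(k * j : ℤ)) % (m : ℤ)).toNat
      = (x + 1) ^ m - 1 :=
  stmt5_general m k hm ω hω b hb x
end

section
/- Let k ≥ 1 and m ≥ 1 be integers, let x, s, z ∈ ℂ, let ω ∈ ℂ be a primitive m-th root of unity, and let R be the multiset of roots in ℂ, counted with multiplicity, of the monic polynomial X^k − x·X^{k−1} − s (so R has cardinality k). Then ∏_{j=0}^{m−1} (1 − ω^j·x·z − ω^{kj}·s·z^k) = ∏_{α∈R} (1 − α^m·z^m). -/
/-!
Each root `α` contributes `∏ⱼ (1 - ωʲ z α) = 1 - αᵐ zᵐ`, so the right-hand side is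
`∏ⱼ ∏_α (1 - ωʲ z α)`. For fixed `w = ωʲ z`, the product `∏_α (1 - w α)` is the reversed
polynomial `1 - x w - s wᵏ`, which is the `j`-th factor on the left.
-/

open Polynomial

theorem IsPrimitiveRoot.prod_range_one_sub_pow_mul {R : Type*} [CommRing R] [IsDomain R]
    {ω : R} {m : ℕ} (hω : IsPrimitiveRoot ω m) (hm : 0 < m) (t : R) :
    ∏ j ∈ Finset.range m, (1 - ω ^ j * t) = 1 - t ^ m := by
  classical
  have himage : nthRootsFinset m (1 : R) = (Finset.range m).image (ω ^ ·) := by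
    rw [nthRootsFinset_def, hω.nthRoots_eq (one_pow m)]
    simp [Finset.image]
  rw [← one_pow m, hω.pow_sub_pow_eq_prod_sub_mul _ _ hm, himage,
    Finset.prod_image fun i hi j hj h => hω.pow_inj (by simpa using hi) (by simpa using hj) h,
    one_pow]

theorem Polynomial.Monic.prod_roots_one_sub_mul {K : Type*} [Field K] {p : K[X]} (hp : p.Monic)
    (hs : p.Splits) {w : K} (hw : w ≠ 0) :
    (p.roots.map (1 - w * ·)).prod = w ^ p.natDegree * p.eval w⁻¹ := by
  have hfactor : ∀ α, 1 - w * α = w * (w⁻¹ - α) := fun α => by field_simp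
  rw [hs.eval_eq_prod_roots_of_monic hp, hs.natDegree_eq_card_roots, Multiset.map_congr rfl
    fun α _ => hfactor α, Multiset.prod_map_mul, Multiset.map_const', Multiset.prod_replicate]

theorem prod_roots_trinomial_one_sub_mul {K : Type*} [Field K] {k : ℕ} (hk : 1 ≤ k) (x s w : K)
    (hs : (X ^ k - C x * X ^ (k - 1) - C s : K[X]).Splits) :
    ((X ^ k - C x * X ^ (k - 1) - C s : K[X]).roots.map (1 - w * ·)).prod
      = 1 - x * w - s * w ^ k := by
  obtain ⟨n, rfl⟩ := Nat.exists_eq_add_of_le' hk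
  rw [Nat.add_sub_cancel] at hs ⊢
  rcases eq_or_ne w 0 with rfl | hw
  · simp
  have hmonic : (X ^ (n + 1) - C x * X ^ n - C s : K[X]).Monic := by monicity!
  have hdeg : (X ^ (n + 1) - C x * X ^ n - C s : K[X]).natDegree = n + 1 := by compute_degree!
  rw [hmonic.prod_roots_one_sub_mul hs hw, hdeg]
  simp only [eval_sub, eval_pow, eval_X, eval_mul, eval_C, inv_pow]
  field_simp
  ring

open Polynomial in
theorem stmt6 (k m : ℕ) (hk : 1 ≤ k) (hm : 1 ≤ m) (x s z : ℂ) (ω : ℂ)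
    (hω : IsPrimitiveRoot ω m) (R : Multiset ℂ)
    (hR : R = (X ^ k - C x * X ^ (k - 1) - C s : ℂ[X]).roots) :
    ∏ j ∈ Finset.range m, (1 - ω ^ j * x * z - ω ^ (k * j) * s * z ^ k)
      = (R.map fun α => 1 - α ^ m * z ^ m).prod := by
  have hfactor (j : ℕ) : 1 - ω ^ j * x * z - ω ^ (k * j) * s * z ^ k
      = (R.map fun α => 1 - ω ^ j * z * α).prod := by
    rw [hR, prod_roots_trinomial_one_sub_mul hk x s _ (IsAlgClosed.splits _), mul_pow, pow_mul']
    ring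
  have hcolumn (α : ℂ) : ∏ j ∈ Finset.range m, (1 - ω ^ j * z * α) = 1 - α ^ m * z ^ m := by
    simp only [mul_assoc, hω.prod_range_one_sub_pow_mul hm]
    ring
  simp only [hfactor, ← hcolumn]
  exact Multiset.prod_map_prod_map _ _
end

section
/- Let k ≥ 1 be an integer, let x, s ∈ ℂ, and let R be the multiset of roots in ℂ, counted with multiplicity, of the monic polynomial X^k − x·X^{k−1} − s (so R has cardinality k). Then for every integer m ≥ 1, the power sum ∑_{α∈R} α^m equals the generalized Lucas polynomial L_m^{(k)}(x, s). -/
/-! The roots of `P = X^k - x X^(k-1) - s` satisfy `α^k = x α^(k-1) + s`, so their power sums obey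
the Lucas recurrence from index `k` on. Below `k`, note that `P` differs from `X^(k-1) (X - x)`
only in its constant term, so by Vieta both have the same `e_1, …, e_(k-1)`; by Newton's
identities they then have the same power sums `p_1, …, p_(k-1)`, which for `X^(k-1) (X - x)` are
`x^m`. -/

/-- The generalized Lucas polynomials `L_n^{(k)}(x, s)` (over `ℂ`):
`L_0 = k`, `L_n = x^n` for `0 < n < k`, and `L_n = x·L_{n-1} + s·L_{n-k}` for `n ≥ k`. -/
noncomputable def Lk (k : ℕ) (x s : ℂ) : ℕ → ℂ
  | n =>
    if n = 0 then (k : ℂ)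
    else if n < k then x ^ n
    else if k = 0 then 0
    else x * Lk k x s (n - 1) + s * Lk k x s (n - k)
  termination_by n => n
  decreasing_by all_goals omega

open Finset Polynomial

theorem Multiset.sum_map_pow_eq_mul_esymm_sub_sum {A : Type*} [CommRing A] (R : Multiset A)
    {m : ℕ} (hm : 0 < m) :
    (R.map (· ^ m)).sum = (-1) ^ (m + 1) * m * R.esymm m -
      ∑ a ∈ HasAntidiagonal.antidiagonal m with a.1 ∈ Set.Ioo 0 m,
        (-1) ^ a.1 * R.esymm a.1 * (R.map (· ^ a.2)).sum := by
  classical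
  let f : R → A := fun α => α
  have he (n : ℕ) : MvPolynomial.aeval f (MvPolynomial.esymm R A n) = R.esymm n := by
    rw [MvPolynomial.aeval_esymm_eq_multiset_esymm, Multiset.map_univ_coe]
  have hp (n : ℕ) : MvPolynomial.aeval f (MvPolynomial.psum R A n) = (R.map (· ^ n)).sum := by
    simp only [MvPolynomial.psum, map_sum, map_pow, MvPolynomial.aeval_X]
    exact Multiset.map_univ R (· ^ n) ▸ rfl
  have key := congrArg (MvPolynomial.aeval f) (MvPolynomial.psum_eq_mul_esymm_sub_sum R A m hm)
  simpa only [map_sub, map_mul, map_pow, map_neg, map_one, map_natCast, map_sum, he, hp] using key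

theorem Multiset.sum_map_pow_eq_of_esymm_eq {A : Type*} [CommRing A] {R S : Multiset A} {k : ℕ}
    (h : ∀ i < k, R.esymm i = S.esymm i) {m : ℕ} (hm : 0 < m) (hmk : m < k) :
    (R.map (· ^ m)).sum = (S.map (· ^ m)).sum := by
  induction m using Nat.strong_induction_on with
  | _ m ih =>
    rw [Multiset.sum_map_pow_eq_mul_esymm_sub_sum R hm,
      Multiset.sum_map_pow_eq_mul_esymm_sub_sum S hm, h m hmk]
    congr 1
    refine Finset.sum_congr rfl fun a ha => ?_
    obtain ⟨hsum, hpos, hlt⟩ : a.1 + a.2 = m ∧ 0 < a.1 ∧ a.1 < m := by simpa using ha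
    rw [h a.1 (by omega), ih a.2 (by omega) (by omega) (by omega)]

theorem Multiset.sum_map_pow_eq_of_forall_pow_eq {A : Type*} [CommSemiring A] {R : Multiset A}
    {k m : ℕ} {x s : A} (hk : 0 < k) (hkm : k ≤ m)
    (hroot : ∀ α ∈ R, α ^ k = x * α ^ (k - 1) + s) :
    (R.map (· ^ m)).sum = x * (R.map (· ^ (m - 1))).sum + s * (R.map (· ^ (m - k))).sum := by
  have hpow : ∀ α ∈ R, α ^ m = x * α ^ (m - 1) + s * α ^ (m - k) := fun α hα => by
    calc α ^ m = α ^ (m - k) * α ^ k := by rw [← pow_add]; congr 1; omega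
      _ = x * (α ^ (m - k) * α ^ (k - 1)) + s * α ^ (m - k) := by rw [hroot α hα]; ring
      _ = x * α ^ (m - 1) + s * α ^ (m - k) := by rw [← pow_add, Nat.sub_add_sub_cancel hkm hk]
  rw [Multiset.map_congr rfl hpow, Multiset.sum_map_add, Multiset.sum_map_mul_left,
    Multiset.sum_map_mul_left]

namespace Polynomial

variable {A : Type*} [CommRing A] [IsDomain A]

theorem esymm_roots_add_C {q : A[X]} (c : A) (hq : q.Splits) (hqc : (q + C c).Splits) {i : ℕ}
    (hi : i < q.natDegree) : (q + C c).roots.esymm i = q.roots.esymm i := by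
  have hq0 : q ≠ 0 := by rintro rfl; simp at hi
  have hcoeff : (q + C c).coeff (q.natDegree - i) = q.coeff (q.natDegree - i) := by
    rw [coeff_add, coeff_C, if_neg (by omega), add_zero]
  have hlc : (q + C c).leadingCoeff = q.leadingCoeff := by
    rw [leadingCoeff, natDegree_add_C, coeff_add, coeff_C, if_neg (by omega), add_zero,
      leadingCoeff]
  rw [coeff_eq_esymm_roots_of_card (splits_iff_card_roots.mp hqc)
      (by rw [natDegree_add_C]; omega),
    coeff_eq_esymm_roots_of_card (splits_iff_card_roots.mp hq) (by omega), hlc,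
    natDegree_add_C, Nat.sub_sub_self hi.le] at hcoeff
  exact mul_left_cancel₀ (mul_ne_zero (leadingCoeff_ne_zero.mpr hq0) (by simp)) hcoeff

theorem sum_map_pow_roots_X_pow_mul_X_sub_C (n : ℕ) (x : A) {m : ℕ} (hm : 0 < m) :
    ((X ^ n * (X - C x)).roots.map (· ^ m)).sum = x ^ m := by
  rw [roots_mul (mul_ne_zero (pow_ne_zero _ X_ne_zero) (X_sub_C_ne_zero x)), roots_X_pow,
    roots_X_sub_C]
  simp [Multiset.map_nsmul, Multiset.sum_nsmul, zero_pow hm.ne']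

end Polynomial

theorem Lk_zero (k : ℕ) (x s : ℂ) : Lk k x s 0 = k := by
  rw [Lk]; simp

theorem Lk_of_pos_of_lt {k n : ℕ} (x s : ℂ) (hn : 0 < n) (hnk : n < k) :
    Lk k x s n = x ^ n := by
  rw [Lk]; simp [hn.ne', hnk]

theorem Lk_of_le {k n : ℕ} (x s : ℂ) (hk : 0 < k) (hkn : k ≤ n) :
    Lk k x s n = x * Lk k x s (n - 1) + s * Lk k x s (n - k) := by
  rw [Lk]; simp [show n ≠ 0 by omega, show ¬ n < k by omega, hk.ne']

theorem sum_map_pow_eq_Lk {R : Multiset ℂ} {k : ℕ} {x s : ℂ} (hk : 0 < k)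
    (hcard : Multiset.card R = k) (hsmall : ∀ m, 0 < m → m < k → (R.map (· ^ m)).sum = x ^ m)
    (hroot : ∀ α ∈ R, α ^ k = x * α ^ (k - 1) + s) (m : ℕ) :
    (R.map (· ^ m)).sum = Lk k x s m := by
  induction m using Nat.strong_induction_on with
  | _ m ih =>
    rcases Nat.eq_zero_or_pos m with rfl | hm
    · simp [Lk_zero, hcard]
    rcases lt_or_ge m k with hmk | hkm
    · rw [hsmall m hm hmk, Lk_of_pos_of_lt x s hm hmk]
    · rw [Multiset.sum_map_pow_eq_of_forall_pow_eq hk hkm hroot, Lk_of_le x s hk hkm,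
        ih (m - 1) (by omega), ih (m - k) (by omega)]

open Polynomial in
theorem stmt7 (k : ℕ) (hk : 1 ≤ k) (x s : ℂ) (R : Multiset ℂ)
    (hR : R = (X ^ k - C x * X ^ (k - 1) - C s : ℂ[X]).roots) :
    ∀ m : ℕ, 1 ≤ m → (R.map fun α => α ^ m).sum = Lk k x s m := by
  set Q : ℂ[X] := X ^ (k - 1) * (X - C x)
  have hP : (X ^ k - C x * X ^ (k - 1) - C s : ℂ[X]) = Q + C (-s) := by
    rw [C_neg, ← pow_sub_one_mul (by omega : k ≠ 0)]; ring
  have hQdeg : Q.natDegree = k := by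
    rw [natDegree_mul (pow_ne_zero _ X_ne_zero) (X_sub_C_ne_zero x), natDegree_X_pow,
      natDegree_X_sub_C]; omega
  rw [hP] at hR
  refine fun m _ => sum_map_pow_eq_Lk hk ?_ (fun m hm hmk => ?_) (fun α hα => ?_) m
  · rw [hR, (splits_iff_card_roots.mp (IsAlgClosed.splits _)), natDegree_add_C, hQdeg]
  · rw [hR, Multiset.sum_map_pow_eq_of_esymm_eq (S := Q.roots) (fun i hi => ?_) hm hmk,
      sum_map_pow_roots_X_pow_mul_X_sub_C _ _ hm]
    exact esymm_roots_add_C _ (IsAlgClosed.splits _) (IsAlgClosed.splits _) (hQdeg ▸ hi)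
  · have hne : Q + C (-s) ≠ 0 :=
      ne_zero_of_natDegree_gt (n := 0) (by rw [natDegree_add_C, hQdeg]; omega)
    rw [hR, mem_roots hne, IsRoot, ← hP] at hα
    simp only [eval_sub, eval_mul, eval_pow, eval_X, eval_C] at hα
    linear_combination hα
end

section
/- Let k ≥ 2 be an integer, let x, s ∈ ℂ with s ≠ 0, let R be the multiset of roots in ℂ, counted with multiplicity, of the monic polynomial X^k − x·X^{k−1} − s, and let P = ∏_{α∈R} α be the product of all roots. Then ∏_{α∈R} (X − P/α) = X^k + (−1)^{k−1}·s^{k−2}·x·X − s^{k−1} as polynomials in ℂ[X]. In particular, the polynomial t^k + (−1)^{k−1}s^{k−2}x·t − s^{k−1} is the characteristic polynomial of the sequence (e_{k−1}(α^m : α∈R))_{m≥0}. -/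
/-!
If the roots `α` of a monic polynomial `p` of degree `k` are nonzero with product `P`, then
for `z ≠ 0` we have `P · ∏ (z - P/α) = ∏ (α z - P) = (-z)^k p(P/z)`. For
`p = X^k - x X^{k-1} - s`, where `P = (-1)^(k-1) s` by Vieta, the right-hand side is
`P (z^k + (-1)^(k-1) s^(k-2) x z - s^(k-1))`.
Hence every `β = P/α` is a root of this trinomial, so the power sums `∑ β^m` obey its linear
recurrence, and `e_{k-1}(α^m) = P^m ∑ α^(-m) = ∑ β^m`.
-/

namespace Multiset

theorem esymm_cons {R : Type*} [CommSemiring R] (a : R) (s : Multiset R) (n : ℕ) :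
    (a ::ₘ s).esymm (n + 1) = s.esymm (n + 1) + a * s.esymm n := by
  simp [esymm, map_map, sum_map_mul_left]

theorem esymm_card_eq_prod {R : Type*} [CommSemiring R] (s : Multiset R) :
    s.esymm (card s) = s.prod := by
  simp [esymm]

variable {K : Type*} [Field K]

theorem esymm_card_cons_eq_prod_mul_sum_inv {a : K} {s : Multiset K}
    (h : ∀ b ∈ a ::ₘ s, b ≠ 0) :
    (a ::ₘ s).esymm (card s) = (a ::ₘ s).prod * ((a ::ₘ s).map (·⁻¹)).sum := by
  induction s using Multiset.induction generalizing a with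
  | empty => simp [esymm, mul_inv_cancel₀ (h a (mem_singleton_self a))]
  | cons b t ih =>
    have hb : b ≠ 0 := h b (by simp)
    have ht : ∀ c ∈ a ::ₘ t, c ≠ 0 := fun c hc => h c (by grind)
    rw [cons_swap, card_cons, esymm_cons, ih ht, ← card_cons a t, esymm_card_eq_prod]
    simp only [prod_cons, map_cons, sum_cons]
    field_simp

theorem prod_mul_prod_map_sub_div {s : Multiset K} (hs : ∀ a ∈ s, a ≠ 0) (c : K) {z : K}
    (hz : z ≠ 0) :
    s.prod * (s.map fun a => z - c / a).prod = (-z) ^ card s * (s.map fun a => c / z - a).prod := by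
  calc s.prod * (s.map fun a => z - c / a).prod = (s.map fun a => a * (z - c / a)).prod := by
        rw [prod_map_mul, map_id']
    _ = (s.map fun a => -z * (c / z - a)).prod := congrArg prod <| map_congr rfl fun a ha => by
        field_simp [hs a ha]
        ring
    _ = (-z) ^ card s * (s.map fun a => c / z - a).prod := by
        rw [prod_map_mul, map_const', prod_replicate]

theorem sum_map_pow_add_eq_zero {R : Type*} [CommRing R] {s : Multiset R} {k : ℕ} {c d : R}
    (hs : ∀ b ∈ s, b ^ k + c * b - d = 0) (m : ℕ) :
    (s.map (· ^ (m + k))).sum + c * (s.map (· ^ (m + 1))).sum - d * (s.map (· ^ m)).sum = 0 := by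
  rw [← sum_map_mul_left, ← sum_map_mul_left, ← sum_map_add, ← sum_map_sub]
  refine sum_eq_zero fun _ hx => ?_
  obtain ⟨b, hb, rfl⟩ := mem_map.1 hx
  linear_combination b ^ m * hs b hb

theorem esymm_map_pow_eq_sum_map_prod_div_pow {s : Multiset K} {n : ℕ} (hcard : card s = n + 1)
    (hs : ∀ a ∈ s, a ≠ 0) (m : ℕ) :
    (s.map (· ^ m)).esymm n = (s.map fun a => (s.prod / a) ^ m).sum := by
  obtain ⟨a, ha⟩ := card_pos_iff_exists_mem.1 (by omega : 0 < card s)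
  obtain ⟨t, rfl⟩ := exists_cons_of_mem ha
  obtain rfl : card t = n := by simpa using hcard
  have hpow : ∀ b ∈ (a ::ₘ t).map (· ^ m), b ≠ 0 := by
    simp only [mem_map]
    rintro _ ⟨b, hb, rfl⟩
    exact pow_ne_zero m (hs b hb)
  rw [map_cons] at hpow ⊢
  rw [← card_map (· ^ m) t, esymm_card_cons_eq_prod_mul_sum_inv hpow, ← map_cons (· ^ m),
    prod_map_pow, map_map, ← sum_map_mul_left]
  exact congrArg sum <| map_congr rfl fun b _ => by simp only [Function.comp_apply, map_id']; ring

end Multiset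

namespace Polynomial

variable {K : Type*} [Field K]

theorem ne_zero_of_mem_roots_of_eval_zero_ne_zero {p : K[X]} (h0 : p.eval 0 ≠ 0) {a : K}
    (ha : a ∈ p.roots) : a ≠ 0 :=
  fun h => h0 (h ▸ (isRoot_of_mem_roots ha).eq_zero)

theorem Splits.prod_roots_mul_eval_prod_X_sub_C_div {p : K[X]} (hp : p.Splits) (hm : p.Monic)
    (h0 : p.eval 0 ≠ 0) (c : K) {z : K} (hz : z ≠ 0) :
    p.roots.prod * ((p.roots.map fun a => X - C (c / a)).prod).eval z
      = (-z) ^ p.natDegree * p.eval (c / z) := by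
  have hroots : ∀ a ∈ p.roots, a ≠ 0 := fun _ => ne_zero_of_mem_roots_of_eval_zero_ne_zero h0
  rw [eval_multiset_prod, Multiset.map_map, hp.eval_eq_prod_roots_of_monic hm,
    hp.natDegree_eq_card_roots, ← Multiset.prod_mul_prod_map_sub_div hroots c hz]
  simp

section Trinomial

variable {k : ℕ} {x s : K} {p : K[X]}

theorem eval_zero_of_eq_X_pow_sub_C_mul_X_pow_sub_C (hk : 2 ≤ k)
    (hp : p = X ^ k - C x * X ^ (k - 1) - C s) : p.eval 0 = -s := by
  simp [hp, zero_pow (by omega : k ≠ 0), zero_pow (by omega : k - 1 ≠ 0)]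

theorem monic_of_eq_X_pow_sub_C_mul_X_pow_sub_C (hk : 2 ≤ k)
    (hp : p = X ^ k - C x * X ^ (k - 1) - C s) : p.Monic := by
  obtain ⟨j, rfl⟩ : ∃ j, k = j + 2 := ⟨k - 2, by omega⟩
  subst hp
  monicity!

theorem natDegree_of_eq_X_pow_sub_C_mul_X_pow_sub_C (hk : 2 ≤ k)
    (hp : p = X ^ k - C x * X ^ (k - 1) - C s) : p.natDegree = k := by
  obtain ⟨j, rfl⟩ : ∃ j, k = j + 2 := ⟨k - 2, by omega⟩
  subst hp
  compute_degree!

theorem Splits.prod_roots_of_eq_X_pow_sub_C_mul_X_pow_sub_C (hk : 2 ≤ k)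
    (hp : p = X ^ k - C x * X ^ (k - 1) - C s) (hsplit : p.Splits) :
    p.roots.prod = (-1) ^ (k - 1) * s := by
  have h :=
    hsplit.coeff_zero_eq_prod_roots_of_monic (monic_of_eq_X_pow_sub_C_mul_X_pow_sub_C hk hp)
  rw [coeff_zero_eq_eval_zero, eval_zero_of_eq_X_pow_sub_C_mul_X_pow_sub_C hk hp,
    natDegree_of_eq_X_pow_sub_C_mul_X_pow_sub_C hk hp] at h
  obtain ⟨j, rfl⟩ : ∃ j, k = j + 1 := ⟨k - 1, by omega⟩
  have hsq : ((-1 : K) ^ j) ^ 2 = 1 := by rw [pow_right_comm, neg_one_sq, one_pow]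
  rw [pow_succ] at h
  rw [Nat.add_sub_cancel]
  linear_combination (-1) ^ j * h - p.roots.prod * hsq

theorem Splits.prod_X_sub_C_prod_roots_div_of_eq_X_pow_sub_C_mul_X_pow_sub_C [Infinite K]
    (hk : 2 ≤ k) (hs : s ≠ 0) (hp : p = X ^ k - C x * X ^ (k - 1) - C s) (hsplit : p.Splits) :
    (p.roots.map fun a => X - C (p.roots.prod / a)).prod
      = X ^ k + C ((-1) ^ (k - 1) * s ^ (k - 2) * x) * X - C (s ^ (k - 1)) := by
  have h0 : p.eval 0 ≠ 0 := by
    rwa [eval_zero_of_eq_X_pow_sub_C_mul_X_pow_sub_C hk hp, neg_ne_zero]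
  have hP := hsplit.prod_roots_of_eq_X_pow_sub_C_mul_X_pow_sub_C hk hp
  have hP0 : p.roots.prod ≠ 0 := hP ▸ mul_ne_zero (pow_ne_zero _ (neg_ne_zero.2 one_ne_zero)) hs
  refine eq_of_infinite_eval_eq _ _ <|
    (Set.finite_singleton 0).infinite_compl.mono fun z (hz : z ≠ 0) => mul_left_cancel₀ hP0 ?_
  rw [hsplit.prod_roots_mul_eval_prod_X_sub_C_div (monic_of_eq_X_pow_sub_C_mul_X_pow_sub_C hk hp) h0
    _ hz, natDegree_of_eq_X_pow_sub_C_mul_X_pow_sub_C hk hp, hP, hp]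
  obtain ⟨j, rfl⟩ : ∃ j, k = j + 2 := ⟨k - 2, by omega⟩
  simp only [eval_add, eval_sub, eval_mul, eval_pow, eval_X, eval_C, Nat.add_sub_cancel,
    show j + 2 - 1 = j + 1 from rfl]
  have hu2 : ((-1 : K) ^ (j + 1)) ^ 2 = 1 := by rw [pow_right_comm, neg_one_sq, one_pow]
  have huu : ((-1 : K) ^ (j + 1)) ^ (j + 1) = (-1) ^ (j + 1) := by
    rcases neg_one_pow_eq_or K (j + 1) with h | h <;> simp [h]
  rw [neg_pow, pow_succ (-1 : K) (j + 1), div_pow, div_pow]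
  generalize (-1 : K) ^ (j + 1) = u at hu2 huu ⊢
  field_simp
  linear_combination (x * s ^ (j + 1) * z ^ (j + 2) * u - s ^ (j + 2) * z ^ (j + 1) * u ^ 2) * huu
    - s ^ (j + 2) * z ^ (j + 1) * u * hu2

end Trinomial

end Polynomial

open Polynomial in
theorem stmt8 (k : ℕ) (hk : 2 ≤ k) (x s : ℂ) (hs : s ≠ 0) (R : Multiset ℂ)
    (hR : R = (X ^ k - C x * X ^ (k - 1) - C s : ℂ[X]).roots)
    (P : ℂ) (hP : P = R.prod) :
    (R.map fun α => (X - C (P / α) : ℂ[X])).prod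
        = X ^ k + C ((-1 : ℂ) ^ (k - 1) * s ^ (k - 2) * x) * X - C (s ^ (k - 1))
      ∧ ∀ m : ℕ,
        (R.map fun α => α ^ (m + k)).esymm (k - 1)
            + (-1 : ℂ) ^ (k - 1) * s ^ (k - 2) * x * (R.map fun α => α ^ (m + 1)).esymm (k - 1)
            - s ^ (k - 1) * (R.map fun α => α ^ m).esymm (k - 1) = 0 := by
  set p : ℂ[X] := X ^ k - C x * X ^ (k - 1) - C s with hp
  have hsplit : p.Splits := IsAlgClosed.splits p
  have hreciprocal := hsplit.prod_X_sub_C_prod_roots_div_of_eq_X_pow_sub_C_mul_X_pow_sub_C hk hs hp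
  subst hR hP
  refine ⟨hreciprocal, fun m => ?_⟩
  have hroots : ∀ a ∈ p.roots, a ≠ 0 := fun _ => ne_zero_of_mem_roots_of_eval_zero_ne_zero
    (by rwa [eval_zero_of_eq_X_pow_sub_C_mul_X_pow_sub_C hk hp, neg_ne_zero])
  have hcard : Multiset.card p.roots = k - 1 + 1 := by
    rw [← hsplit.natDegree_eq_card_roots, natDegree_of_eq_X_pow_sub_C_mul_X_pow_sub_C hk hp]
    omega
  have hreciprocal_roots : ∀ b ∈ p.roots.map (p.roots.prod / ·),
      b ^ k + (-1) ^ (k - 1) * s ^ (k - 2) * x * b - s ^ (k - 1) = 0 := by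
    have h := roots_multiset_prod_X_sub_C (p.roots.map (p.roots.prod / ·))
    rw [Multiset.map_map, Function.comp_def, hreciprocal] at h
    intro b hb
    rw [← h] at hb
    simpa using (isRoot_of_mem_roots hb).eq_zero
  simp only [Multiset.esymm_map_pow_eq_sum_map_prod_div_pow hcard hroots]
  simpa [Multiset.map_map] using Multiset.sum_map_pow_add_eq_zero hreciprocal_roots m
end

section
/- Let k ≥ 1 be an integer and x, s real numbers. Then for every natural number n, F_{n+1}^{(k)}(x, s) = ∑_{j=0}^{⌊n/k⌋} C(n − (k−1)j, j) · s^j · x^{n−kj}. -/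
/-!
Writing `n = i + k j`, the `j`-th summand is `C(i + j, j) s^j x^i`, so Pascal's rule for the
binomial coefficient turns the sum into one satisfying the recurrence `x F_{n-1} + s F_{n-k}` of
the polynomials, and strong induction on `n` finishes.
-/

/-- The generalized Fibonacci polynomials `F_n^{(k)}(x, s)`:
`F_0 = 0`, `F_n = x^(n-1)` for `0 < n < k`, and `F_n = x·F_{n-1} + s·F_{n-k}` for `n ≥ k`
(for `n = k` the recurrence gives `F_k = x^(k-1)`, so we may use `x^(n-1)` for all `0 < n ≤ k`;
this also gives the correct value `F_1 = 1` in the degenerate case `k = 1`). -/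
noncomputable def Fk (k : ℕ) (x s : ℝ) : ℕ → ℝ
  | n =>
    if n = 0 then 0
    else if n ≤ k then x ^ (n - 1)
    else if k = 0 then 0
    else x * Fk k x s (n - 1) + s * Fk k x s (n - k)
  termination_by n => n
  decreasing_by all_goals omega

open Finset

section
variable {k : ℕ} {x s : ℝ}

theorem Fk_of_pos_of_le {n : ℕ} (hn0 : 0 < n) (hnk : n ≤ k) : Fk k x s n = x ^ (n - 1) := by
  rw [Fk, if_neg hn0.ne', if_pos hnk]

theorem Fk_of_lt (hk : 1 ≤ k) {n : ℕ} (hkn : k < n) :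
    Fk k x s n = x * Fk k x s (n - 1) + s * Fk k x s (n - k) := by
  rw [Fk, if_neg (by omega), if_neg (by omega), if_neg (by omega)]

theorem sub_one_mul_add_self (hk : 1 ≤ k) (j : ℕ) : (k - 1) * j + j = k * j := by
  rw [← Nat.succ_mul, Nat.succ_eq_add_one, Nat.sub_add_cancel hk]

variable (k x s) in
/-- For `k * j > n` the truncated subtractions make the binomial coefficient vanish
(see `fibTerm_eq_zero_of_lt`), so sums of these terms may run over any range `N > n / k`. -/
noncomputable def fibTerm (n j : ℕ) : ℝ :=
  ((n - (k - 1) * j).choose j : ℝ) * s ^ j * x ^ (n - k * j)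

theorem fibTerm_zero_right (n : ℕ) : fibTerm k x s (n + 1) 0 = x * fibTerm k x s n 0 := by
  simp [fibTerm, pow_succ', mul_comm]

theorem fibTerm_eq_zero_of_lt (hk : 1 ≤ k) {n j : ℕ} (h : n < k * j) : fibTerm k x s n j = 0 := by
  have hj : j ≠ 0 := by rintro rfl; simp at h
  have := sub_one_mul_add_self hk j
  simp [fibTerm, Nat.choose_eq_zero_of_lt (show n - (k - 1) * j < j by omega)]

theorem fibTerm_succ_right (hk : 1 ≤ k) {n : ℕ} (hkn : k ≤ n) (j : ℕ) :
    fibTerm k x s n (j + 1) = x * fibTerm k x s (n - 1) (j + 1) + s * fibTerm k x s (n - k) j := by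
  have hk1 : k * (j + 1) = k * j + k := by ring
  rcases lt_or_ge n (k * (j + 1)) with h | h
  · rw [fibTerm_eq_zero_of_lt hk h, fibTerm_eq_zero_of_lt hk (by omega),
      fibTerm_eq_zero_of_lt hk (by omega)]
    ring
  obtain ⟨a, rfl⟩ := Nat.exists_eq_add_of_le h
  have := sub_one_mul_add_self hk j
  have := sub_one_mul_add_self hk (j + 1)
  simp only [fibTerm]
  rw [show k * (j + 1) + a - (k - 1) * (j + 1) = a + j + 1 by omega,
    show k * (j + 1) + a - 1 - (k - 1) * (j + 1) = a + j by omega,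
    show k * (j + 1) + a - k - (k - 1) * j = a + j by omega,
    show k * (j + 1) + a - k * (j + 1) = a by omega,
    show k * (j + 1) + a - 1 - k * (j + 1) = a - 1 by omega,
    show k * (j + 1) + a - k - k * j = a by omega]
  rcases a with _ | a
  · simp [Nat.choose_succ_self]
    ring
  · rw [Nat.add_sub_cancel, Nat.choose_succ_succ', show a + 1 + j = a + j + 1 by ring]
    push_cast
    ring

theorem sum_fibTerm_succ (hk : 1 ≤ k) {n : ℕ} (hkn : k ≤ n) (N : ℕ) :
    ∑ j ∈ range (N + 1), fibTerm k x s n j =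
      x * ∑ j ∈ range (N + 1), fibTerm k x s (n - 1) j +
        s * ∑ j ∈ range N, fibTerm k x s (n - k) j := by
  obtain ⟨m, rfl⟩ : ∃ m, n = m + 1 := ⟨n - 1, by omega⟩
  rw [sum_range_succ' _ N, sum_range_succ' _ N]
  simp only [fibTerm_succ_right hk hkn, sum_add_distrib, fibTerm_zero_right, Nat.add_sub_cancel]
  rw [mul_add, mul_sum, mul_sum]
  ring

theorem sum_range_fibTerm_eq (hk : 1 ≤ k) {n N : ℕ} (hN : n / k < N) :
    ∑ j ∈ range N, fibTerm k x s n j = ∑ j ∈ range (n / k + 1), fibTerm k x s n j := by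
  refine (sum_subset (range_subset_range.2 hN) fun j hjN hj => ?_).symm
  rw [mem_range, not_lt, Nat.succ_le_iff, Nat.div_lt_iff_lt_mul hk, mul_comm] at hj
  exact fibTerm_eq_zero_of_lt hk hj

theorem Fk_succ_eq_sum (hk : 1 ≤ k) (n : ℕ) {N : ℕ} (hN : n / k < N) :
    Fk k x s (n + 1) = ∑ j ∈ range N, fibTerm k x s n j := by
  induction n using Nat.strong_induction_on generalizing N with
  | _ n ih =>
    rw [sum_range_fibTerm_eq hk hN]
    rcases lt_or_ge n k with hnk | hkn
    · rw [Fk_of_pos_of_le n.succ_pos hnk, Nat.div_eq_of_lt hnk, sum_range_one]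
      simp [fibTerm]
    have hdiv : (n - k) / k = n / k - 1 := by simpa using Nat.sub_mul_div n k 1
    have hpos : 0 < n / k := Nat.div_pos hkn hk
    have hle : (n - 1) / k ≤ n / k := Nat.div_le_div_right (Nat.sub_le n 1)
    have hFn := ih (n - 1) (by omega) (N := n / k + 1) (by omega)
    have hFnk := ih (n - k) (by omega) (N := n / k) (by omega)
    rw [Nat.sub_add_cancel (by omega)] at hFn
    rw [Fk_of_lt hk (by omega), Nat.add_sub_cancel, hFn, show n + 1 - k = n - k + 1 by omega, hFnk,
      sum_fibTerm_succ hk hkn]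
end

theorem stmt9 (k : ℕ) (hk : 1 ≤ k) (x s : ℝ) (n : ℕ) :
    Fk k x s (n + 1)
      = ∑ j ∈ Finset.range (n / k + 1),
          ((n - (k - 1) * j).choose j : ℝ) * s ^ j * x ^ (n - k * j) :=
  Fk_succ_eq_sum hk n (Nat.lt_succ_self _)
end

section
/- Let k ≥ 2 be an integer and x, s real numbers. Then for every natural number n, G_n^{(k)}(x, s) = ∑_j C(n−j, (k−1)n − kj) · s^j · x^{(k−1)n − kj}, where the sum ranges over all integers j with (k−2)n/k ≤ j ≤ (k−1)n/k (equivalently, over all j for which the binomial coefficient is nonzero and the exponent (k−1)n − kj is nonnegative). -/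
/-- The polynomials `G_n^{(k)}(x, s)`: `G_0 = 1`, `G_n = 0` for `0 < n ≤ k-2`,
`G_{k-1} = s^(k-2)·x`, and `G_n = s^(k-2)·x·G_{n-(k-1)} + s^(k-1)·G_{n-k}` for `n ≥ k`. -/
noncomputable def Gk (k : ℕ) (x s : ℝ) : ℕ → ℝ
  | n =>
    if n = 0 then 1
    else if n ≤ k - 2 then 0
    else if n = k - 1 then s ^ (k - 2) * x
    else if k < 2 then 0
    else s ^ (k - 2) * x * Gk k x s (n - (k - 1)) + s ^ (k - 1) * Gk k x s (n - k)
  termination_by n => n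
  decreasing_by all_goals omega

noncomputable def fkAux (k : ℕ) (x s : ℝ) (n j : ℕ) : ℝ :=
  if k * j ≤ (k-1) * n then
    ((n - j).choose ((k-1)*n - k*j) : ℝ) * s ^ j * x ^ ((k-1)*n - k*j) else 0

noncomputable def AkAux (k : ℕ) (x s : ℝ) (n j : ℕ) : ℝ :=
  if k * j < (k-1) * n then
    ((n-1-j).choose ((k-1)*n - k*j - 1) : ℝ) * s ^ j * x ^ ((k-1)*n - k*j) else 0

noncomputable def BkAux (k : ℕ) (x s : ℝ) (n j : ℕ) : ℝ :=
  if k * j ≤ (k-1) * n then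
    ((n-1-j).choose ((k-1)*n - k*j) : ℝ) * s ^ j * x ^ ((k-1)*n - k*j) else 0

lemma chooseZeroAux (k n j : ℕ) (hk : 2 ≤ k) (h2 : k*j < (k-2)*n) :
    ((n - j).choose ((k-1)*n - k*j) : ℝ) = 0 := by
  have e1 : (k-1)*n + n = k*n := by
    obtain ⟨m, rfl⟩ : ∃ m, k = m + 2 := ⟨k-2, by omega⟩
    simp only [show m+2-1 = m+1 from rfl, show m+2-2 = m from rfl]; ring
  have e2 : (k-2)*n + 2*n = k*n := by
    obtain ⟨m, rfl⟩ : ∃ m, k = m + 2 := ⟨k-2, by omega⟩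
    simp only [show m+2-1 = m+1 from rfl, show m+2-2 = m from rfl]; ring
  rw [Nat.choose_eq_zero_of_lt (by omega)]
  norm_num

-- P1
lemma p1Aux (k n i : ℕ) (x s : ℝ) (hk : 2 ≤ k) (hn : k ≤ n) :
    s ^ (k-2) * x * fkAux k x s (n - (k-1)) i = AkAux k x s n (i + (k-2)) := by
  obtain ⟨m, rfl⟩ : ∃ m, k = m + 2 := ⟨k-2, by omega⟩
  simp only [fkAux, AkAux, show m+2-1 = m+1 from rfl, show m+2-2 = m from rfl] at *
  have r5 : (m+1)*(n-(m+1)) = (m+1)*n - (m+1)*(m+1) := Nat.mul_sub _ _ _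
  have r1 : (m+1)*n = m*n + n := by ring
  have r2 : (m+2)*i = m*i + 2*i := by ring
  have r3 : (m+1)*(m+1) = m*m + 2*m + 1 := by ring
  have r4 : (m+2)*(i+m) = m*i + 2*i + m*m + 2*m := by ring
  have r6 : (m+1)*(m+1) ≤ (m+1)*n := Nat.mul_le_mul_left _ (by omega)
  have hiff : (m+2) * i ≤ (m+1) * (n - (m+1)) ↔ (m+2) * (i+m) < (m+1) * n := by omega
  by_cases hc : (m+2) * i ≤ (m+1) * (n - (m+1))
  · rw [if_pos hc, if_pos (hiff.mp hc)]
    have E : (m+1)*n - (m+2)*(i+m) = ((m+1)*(n-(m+1)) - (m+2)*i) + 1 := by omega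
    have Etop : n - (m+1) - i = n - 1 - (i+m) := by omega
    rw [E, Etop, Nat.add_sub_cancel, pow_succ, pow_add]
    ring
  · rw [if_neg hc, if_neg (by rw [← hiff]; exact hc)]
    ring

-- P2
lemma p2Aux (k n i : ℕ) (x s : ℝ) (hk : 2 ≤ k) (hn : k ≤ n) :
    s ^ (k-1) * fkAux k x s (n - k) i = BkAux k x s n (i + (k-1)) := by
  obtain ⟨m, rfl⟩ : ∃ m, k = m + 2 := ⟨k-2, by omega⟩
  simp only [fkAux, BkAux, show m+2-1 = m+1 from rfl, show m+2-2 = m from rfl] at *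
  have r5 : (m+1)*(n-(m+2)) = (m+1)*n - (m+1)*(m+2) := Nat.mul_sub _ _ _
  have r1 : (m+1)*n = m*n + n := by ring
  have r2 : (m+2)*i = m*i + 2*i := by ring
  have r3 : (m+1)*(m+2) = m*m + 3*m + 2 := by ring
  have r4 : (m+2)*(i+(m+1)) = m*i + 2*i + m*m + 3*m + 2 := by ring
  have r6 : (m+1)*(m+2) ≤ (m+1)*n := Nat.mul_le_mul_left _ (by omega)
  have hiff : (m+2) * i ≤ (m+1) * (n - (m+2)) ↔ (m+2) * (i+(m+1)) ≤ (m+1) * n := by omega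
  by_cases hc : (m+2) * i ≤ (m+1) * (n - (m+2))
  · rw [if_pos hc, if_pos (hiff.mp hc)]
    have E : (m+1)*n - (m+2)*(i+(m+1)) = (m+1)*(n-(m+2)) - (m+2)*i := by omega
    have Etop : n - (m+2) - i = n - 1 - (i+(m+1)) := by omega
    rw [E, Etop, pow_add]
    ring
  · rw [if_neg hc, if_neg (by rw [← hiff]; exact hc)]
    ring

-- P3
lemma p3Aux (k n j : ℕ) (x s : ℝ) (hk : 2 ≤ k) (hn : k ≤ n) (hj : j ≤ n) :
    fkAux k x s n j =
      (if k-2 ≤ j then AkAux k x s n j else 0) +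
      (if k-1 ≤ j then BkAux k x s n j else 0) := by
  have e1 : (k-1)*n + n = k*n := by
    obtain ⟨m, rfl⟩ : ∃ m, k = m + 2 := ⟨k-2, by omega⟩
    simp only [show m+2-1 = m+1 from rfl, show m+2-2 = m from rfl]; ring
  have e1j : (k-1)*j + j = k*j := by
    obtain ⟨m, rfl⟩ : ∃ m, k = m + 2 := ⟨k-2, by omega⟩
    simp only [show m+2-1 = m+1 from rfl, show m+2-2 = m from rfl]; ring
  rcases lt_trichotomy ((k-1)*n) (k*j) with hlt | heq | hgt
  · -- condition false everywhere
    have hA : AkAux k x s n j = 0 := by rw [AkAux, if_neg (by omega)]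
    have hB : BkAux k x s n j = 0 := by rw [BkAux, if_neg (by omega)]
    rw [fkAux, if_neg (by omega), hA, hB]
    simp
  · -- k*j = (k-1)*n : only B contributes
    have hj1 : k - 1 ≤ j := by
      have h2 : (k-1)*k ≤ (k-1)*n := Nat.mul_le_mul_left _ hn
      by_contra hcon
      have h3 : k*(j+1) ≤ k*(k-1) := Nat.mul_le_mul_left _ (by omega)
      have h3' : k*(j+1) = k*j + k := by ring
      have h4 : k*(k-1) = (k-1)*k := Nat.mul_comm _ _
      omega
    have hA : AkAux k x s n j = 0 := by rw [AkAux, if_neg (by omega)]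
    have hB : BkAux k x s n j = ((n-1-j).choose ((k-1)*n - k*j) : ℝ) * s ^ j * x ^ ((k-1)*n - k*j) := by
      rw [BkAux, if_pos (by omega)]
    rw [fkAux, if_pos (by omega), hA, hB, if_pos hj1]
    have hE : (k-1)*n - k*j = 0 := by omega
    rw [hE]
    simp
  · -- k*j < (k-1)*n
    have hjn : j < n := by
      by_contra hcon
      have hmul : k*n ≤ k*j := Nat.mul_le_mul_left _ (by omega)
      omega
    by_cases hj2 : k - 2 ≤ j
    · by_cases hj1 : k - 1 ≤ j
      · -- Pascal
        rw [if_pos hj2, if_pos hj1, fkAux, if_pos (by omega), AkAux, if_pos hgt,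
          BkAux, if_pos (by omega)]
        have hnj : n - j = (n - 1 - j) + 1 := by omega
        have hEE : (k-1)*n - k*j = ((k-1)*n - k*j - 1) + 1 := by omega
        rw [hnj, hEE, Nat.choose_succ_succ, Nat.add_sub_cancel]
        push_cast
        ring
      · -- j = k-2 : B term is zero binom; A term equals via Pascal with zero
        have hje : j = k - 2 := by omega
        rw [if_pos hj2, if_neg hj1, fkAux, if_pos (by omega), AkAux, if_pos hgt]
        have hnj : n - j = (n - 1 - j) + 1 := by omega
        have hEE : (k-1)*n - k*j = ((k-1)*n - k*j - 1) + 1 := by omega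
        have hzero : (n - 1 - j).choose ((k-1)*n - k*j) = 0 := by
          apply Nat.choose_eq_zero_of_lt
          subst hje
          obtain ⟨m, rfl⟩ : ∃ m, k = m + 2 := ⟨k-2, by omega⟩
          simp only [show m+2-1 = m+1 from rfl, show m+2-2 = m from rfl] at *
          have q1 : (m+1)*n = m*n + n := by ring
          have q2 : (m+2)*m = m*m + 2*m := by ring
          have q5 : m*(m+2) ≤ m*n := Nat.mul_le_mul_left _ hn
          have q6 : m*(m+2) = m*m + 2*m := by ring
          omega
        have hzero2 : (n - 1 - j).choose (((k-1)*n - k*j - 1) + 1) = 0 := by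
          rw [← hEE]; exact hzero
        rw [hnj, hEE, Nat.choose_succ_succ, Nat.add_sub_cancel]
        simp only [Nat.succ_eq_add_one, hzero2, Nat.add_zero, add_zero]
    · -- j < k-2 : everything zero
      rw [if_neg hj2, if_neg (by omega), fkAux]
      by_cases hc : k*j ≤ (k-1)*n
      · rw [if_pos hc]
        have hz : k*j < (k-2)*n := by
          have qa : k*(j+1) ≤ k*(k-2) := Nat.mul_le_mul_left _ (by omega)
          have qb : (k-2)*k ≤ (k-2)*n := Nat.mul_le_mul_left _ hn
          have qc : k*(k-2) = (k-2)*k := Nat.mul_comm _ _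
          have qd : k*(j+1) = k*j + k := by ring
          omega
        rw [chooseZeroAux k n j hk hz]
        simp
      · rw [if_neg hc]; simp

lemma sumIfGe (g : ℕ → ℝ) (a N : ℕ) (ha : a ≤ N) :
    ∑ j ∈ Finset.range N, (if a ≤ j then g j else 0) = ∑ j ∈ Finset.Ico a N, g j := by
  rw [Finset.range_eq_Ico, ← Finset.sum_Ico_consecutive _ (Nat.zero_le a) ha]
  have h1 : ∑ j ∈ Finset.Ico 0 a, (if a ≤ j then g j else 0) = 0 := by
    apply Finset.sum_eq_zero
    intro j hj
    rw [Finset.mem_Ico] at hj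
    rw [if_neg (by omega)]
  have h2 : ∑ j ∈ Finset.Ico a N, (if a ≤ j then g j else 0) = ∑ j ∈ Finset.Ico a N, g j := by
    apply Finset.sum_congr rfl
    intro j hj
    rw [Finset.mem_Ico] at hj
    rw [if_pos hj.1]
  rw [h1, h2, zero_add]

-- The recurrence for the sum
lemma sumRec (k n : ℕ) (x s : ℝ) (hk : 2 ≤ k) (hn : k ≤ n) :
    ∑ j ∈ Finset.range (n+1), fkAux k x s n j =
      s ^ (k-2) * x * ∑ i ∈ Finset.range (n - (k-1) + 1), fkAux k x s (n - (k-1)) i +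
      s ^ (k-1) * ∑ i ∈ Finset.range (n - k + 1), fkAux k x s (n - k) i := by
  have e1 : (k-1)*n + n = k*n := by
    obtain ⟨m, rfl⟩ : ∃ m, k = m + 2 := ⟨k-2, by omega⟩
    simp only [show m+2-1 = m+1 from rfl, show m+2-2 = m from rfl]; ring
  have step1 : ∑ j ∈ Finset.range (n+1), fkAux k x s n j =
      (∑ j ∈ Finset.range (n+1), (if k-2 ≤ j then AkAux k x s n j else 0)) +
      (∑ j ∈ Finset.range (n+1), (if k-1 ≤ j then BkAux k x s n j else 0)) := by
    rw [← Finset.sum_add_distrib]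
    apply Finset.sum_congr rfl
    intro j hj
    rw [Finset.mem_range] at hj
    exact p3Aux k n j x s hk hn (by omega)
  have hA : n + 1 - (k-2) = (n - (k-1) + 1) + 1 := by omega
  have hB : n + 1 - (k-1) = (n - k + 1) + 1 := by omega
  have hAtop : AkAux k x s n (k-2 + (n - (k-1) + 1)) = 0 := by
    have h : k - 2 + (n - (k-1) + 1) = n := by omega
    rw [h, AkAux, if_neg (by omega)]
  have hBtop : BkAux k x s n (k-1 + (n - k + 1)) = 0 := by
    have h : k - 1 + (n - k + 1) = n := by omega
    rw [h, BkAux, if_neg (by omega)]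
  have SA : ∑ i ∈ Finset.range ((n - (k-1) + 1) + 1), AkAux k x s n (k-2 + i)
      = ∑ i ∈ Finset.range (n - (k-1) + 1), AkAux k x s n (k-2 + i) := by
    rw [Finset.sum_range_succ, hAtop, add_zero]
  have SB : ∑ i ∈ Finset.range ((n - k + 1) + 1), BkAux k x s n (k-1 + i)
      = ∑ i ∈ Finset.range (n - k + 1), BkAux k x s n (k-1 + i) := by
    rw [Finset.sum_range_succ, hBtop, add_zero]
  rw [step1, sumIfGe _ _ _ (by omega), sumIfGe _ _ _ (by omega),
    Finset.sum_Ico_eq_sum_range, Finset.sum_Ico_eq_sum_range, hA, hB, SA, SB,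
    Finset.mul_sum, Finset.mul_sum]
  congr 1
  · apply Finset.sum_congr rfl
    intro i _
    rw [p1Aux k n i x s hk hn, Nat.add_comm]
  · apply Finset.sum_congr rfl
    intro i _
    rw [p2Aux k n i x s hk hn, Nat.add_comm]

lemma gkEq (k : ℕ) (x s : ℝ) (hk : 2 ≤ k) :
    ∀ n, Gk k x s n = ∑ j ∈ Finset.range (n+1), fkAux k x s n j := by
  intro n
  induction n using Nat.strong_induction_on with
  | _ n ih =>
    rw [Gk]
    by_cases h0 : n = 0
    · subst h0
      simp [fkAux]
    · rw [if_neg h0]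
      by_cases h1 : n ≤ k - 2
      · rw [if_pos h1]
        symm
        apply Finset.sum_eq_zero
        intro j hj
        rw [Finset.mem_range] at hj
        rw [fkAux]
        by_cases hc : k*j ≤ (k-1)*n
        · rw [if_pos hc]
          have e1 : (k-1)*n + n = k*n := by
            obtain ⟨m, rfl⟩ : ∃ m, k = m + 2 := ⟨k-2, by omega⟩
            simp only [show m+2-1 = m+1 from rfl, show m+2-2 = m from rfl]; ring
          have hjn : j < n := by
            by_contra hcon
            have : k*n ≤ k*j := Nat.mul_le_mul_left _ (by omega)
            omega
          have h4 : (k-1)*(j+1) ≤ (k-1)*n := Nat.mul_le_mul_left _ (by omega)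
          have h5 : (k-1)*(j+1) = (k-1)*j + (k-1) := by ring
          have h6 : (k-1)*j + j = k*j := by
            obtain ⟨m, rfl⟩ : ∃ m, k = m + 2 := ⟨k-2, by omega⟩
            simp only [show m+2-1 = m+1 from rfl, show m+2-2 = m from rfl]; ring
          rw [Nat.choose_eq_zero_of_lt (show n - j < (k-1)*n - k*j by omega)]
          simp
        · rw [if_neg hc]
      · rw [if_neg h1]
        by_cases h2 : n = k - 1
        · rw [if_pos h2]
          subst h2
          symm
          rw [Finset.sum_eq_single (k-2)]
          · rw [fkAux]
            obtain ⟨m, rfl⟩ : ∃ m, k = m + 2 := ⟨k-2, by omega⟩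
            simp only [show m+2-1 = m+1 from rfl, show m+2-2 = m from rfl]
            have q1 : (m+1)*(m+1) = (m+2)*m + 1 := by ring
            rw [if_pos (by omega)]
            have q2 : (m+1)*(m+1) - (m+2)*m = 1 := by omega
            have q3 : m + 1 - m = 1 := by omega
            rw [q2, q3]
            norm_num
          · intro j hj hne
            rw [Finset.mem_range] at hj
            rw [fkAux]
            obtain ⟨m, rfl⟩ : ∃ m, k = m + 2 := ⟨k-2, by omega⟩
            simp only [show m+2-1 = m+1 from rfl, show m+2-2 = m from rfl] at *
            by_cases hc : (m+2)*j ≤ (m+1)*(m+1)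
            · rw [if_pos hc]
              have hz : (m+2)*j < m*(m+1) := by
                have q1 : (m+2)*j + (m+2) ≤ (m+2)*(m+1) := by
                  have := Nat.mul_le_mul_left (m+2) (show j+1 ≤ m+1 by
                    by_contra hcon
                    have hq : m + 1 ≤ j := by omega
                    have : (m+2)*(m+1) ≤ (m+2)*j := Nat.mul_le_mul_left _ hq
                    have q2 : (m+2)*(m+1) = m*m + 3*m + 2 := by ring
                    have q3 : (m+1)*(m+1) = m*m + 2*m + 1 := by ring
                    omega)
                  calc (m+2)*j + (m+2) = (m+2)*(j+1) := by ring
                  _ ≤ (m+2)*(m+1) := this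
                have hne2 : j ≠ m := hne
                have hjm : j + 1 ≤ m := by
                  rcases Nat.lt_or_ge j m with h | h
                  · omega
                  · exfalso
                    have hq : m + 1 ≤ j ∨ j = m := by omega
                    rcases hq with hq | hq
                    · have : (m+2)*(m+1) ≤ (m+2)*j := Nat.mul_le_mul_left _ hq
                      have q2 : (m+2)*(m+1) = m*m + 3*m + 2 := by ring
                      have q3 : (m+1)*(m+1) = m*m + 2*m + 1 := by ring
                      omega
                    · exact hne2 hq
                have q4 : (m+2)*(j+1) ≤ (m+2)*m := Nat.mul_le_mul_left _ hjm
                have q5 : (m+2)*(j+1) = (m+2)*j + (m+2) := by ring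
                have q7 : (m+2)*m = m*m + 2*m := by ring
                have q8 : m*(m+1) = m*m + m := by ring
                omega
              have := chooseZeroAux (m+2) (m+1) j (by omega) (by simpa using hz)
              simp only [show m+2-1 = m+1 from rfl, show m+2-2 = m from rfl] at this
              rw [this]
              simp
            · rw [if_neg hc]
          · intro h
            rw [Finset.mem_range] at h
            omega
        · rw [if_neg h2, if_neg (by omega)]
          have hn : k ≤ n := by omega
          rw [ih (n - (k-1)) (by omega), ih (n - k) (by omega)]
          have h3 : n - (k-1) + 1 = n - (k-1) + 1 := rfl
          rw [sumRec k n x s hk hn]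

theorem stmt11 (k : ℕ) (hk : 2 ≤ k) (x s : ℝ) (n : ℕ) :
    Gk k x s n
      = ∑ j ∈ Finset.Icc (((k - 2) * n + k - 1) / k) ((k - 1) * n / k),
          ((n - j).choose ((k - 1) * n - k * j) : ℝ) * s ^ j * x ^ ((k - 1) * n - k * j) := by
  rw [gkEq k x s hk n]
  have hk0 : 0 < k := by omega
  have hsub : Finset.Icc (((k - 2) * n + k - 1) / k) ((k - 1) * n / k) ⊆ Finset.range (n+1) := by
    intro j hj
    rw [Finset.mem_Icc] at hj
    rw [Finset.mem_range]
    have h1 : (k-1)*n / k ≤ k*n / k := Nat.div_le_div_right (Nat.mul_le_mul_right _ (by omega))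
    rw [Nat.mul_div_cancel_left _ hk0] at h1
    omega
  rw [← Finset.sum_subset hsub]
  · apply Finset.sum_congr rfl
    intro j hj
    rw [Finset.mem_Icc] at hj
    have hc : k * j ≤ (k-1)*n := by
      have h := (Nat.le_div_iff_mul_le hk0).mp hj.2
      rwa [Nat.mul_comm] at h
    rw [fkAux, if_pos hc]
  · intro j hj hnot
    rw [Finset.mem_range] at hj
    rw [Finset.mem_Icc, not_and_or] at hnot
    rw [fkAux]
    by_cases hc : k*j ≤ (k-1)*n
    · rw [if_pos hc]
      have hub : j ≤ (k-1)*n / k := (Nat.le_div_iff_mul_le hk0).mpr (by rw [Nat.mul_comm]; exact hc)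
      have hlb : j < ((k - 2) * n + k - 1) / k := by
        rcases hnot with h | h
        · omega
        · omega
      have hz : k*j < (k-2)*n := by
        have h := (Nat.le_div_iff_mul_le hk0).mp (show j + 1 ≤ ((k-2)*n + k - 1)/k by omega)
        rw [Nat.add_mul, one_mul, Nat.mul_comm] at h
        omega
      rw [chooseZeroAux k n j hk hz]
      simp
    · rw [if_neg hc]
end

section
/- For all integers m ≥ 1, ℓ ∈ ℤ, and every natural number n, one has ∑_{j=0}^{⌊m/2⌋} (−1)^j · (C(m−j, j) + C(m−1−j, j−1)) · A_{n+m−2j}(2, 2m, ℓ, −1) = 0, where C(m−j,j) + C(m−1−j,j−1) = (m/(m−j))·C(m−j,j) is the j-th Lucas coefficient (with C(·, −1) = 0). Equivalently, L_m(N, −1)·A_n(2, 2m, ℓ, −1) = 0 where N is the shift operator N·A_n = A_{n+1} and L_m denotes the Lucas polynomial. -/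
/-- `A n (k, m, ℓ, z) = ∑_{h ∈ ℤ} C(n, ⌊(n + m h + ℓ)/k⌋) z^h`. -/
noncomputable def A (k m : ℕ) (l : ℤ) (z : ℝ) (n : ℕ) : ℝ :=
  ∑ᶠ h : ℤ, Cz n (((n : ℤ) + m * h + l).fdiv k) * z ^ h

open Finset Polynomial

/-- `C(m - j, j) + C(m - 1 - j, j - 1)`. Truncated subtraction makes `lucasCoeff 1 1 = 1`, which is
why vanishing above `m / 2` needs `2 ≤ m`. -/
def lucasCoeff (m : ℕ) : ℕ → ℕ
  | 0 => 1
  | j + 1 => (m - (j + 1)).choose (j + 1) + (m - (j + 2)).choose j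

lemma choose_add_Cz_eq_lucasCoeff (m j : ℕ) :
    ((m - j).choose j : ℝ) + Cz (m - 1 - j) ((j : ℤ) - 1) = lucasCoeff m j := by
  rcases j with _ | j
  · simp [lucasCoeff, Cz]
  · rw [Cz, if_pos (by omega), show ((j + 1 : ℕ) - 1 : ℤ).toNat = j by omega,
      show m - 1 - (j + 1) = m - (j + 2) by omega, lucasCoeff]
    push_cast
    rfl

lemma lucasCoeff_eq_zero {m j : ℕ} (hm : 2 ≤ m) (hj : m < 2 * j) : lucasCoeff m j = 0 := by
  rcases j with _ | j
  · omega
  · rw [lucasCoeff, Nat.choose_eq_zero_of_lt (by omega), Nat.choose_eq_zero_of_lt (by omega)]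

lemma lucasCoeff_add_two {m i : ℕ} (hm : 1 ≤ m) (hi : 2 * i ≤ m) :
    lucasCoeff (m + 2) (i + 1) = lucasCoeff (m + 1) (i + 1) + lucasCoeff m i := by
  rcases i with _ | k
  · simp only [lucasCoeff, zero_add, Nat.choose_one_right, Nat.choose_zero_right]
    omega
  · obtain ⟨d, rfl⟩ : ∃ d, m = k + d + 2 + k := ⟨m - (2 * k + 2), by omega⟩
    simp only [lucasCoeff]
    rw [show k + d + 2 + k + 2 - (k + 1 + 1) = k + d + 2 by omega,
      show k + d + 2 + k + 2 - (k + 1 + 2) = k + d + 1 by omega,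
      show k + d + 2 + k + 1 - (k + 1 + 1) = k + d + 1 by omega,
      show k + d + 2 + k + 1 - (k + 1 + 2) = k + d by omega,
      show k + d + 2 + k - (k + 1) = k + d + 1 by omega,
      show k + d + 2 + k - (k + 2) = k + d by omega,
      Nat.choose_succ_succ' (k + d + 1) (k + 1), Nat.choose_succ_succ' (k + d) k]
    omega

section Lucas

variable {R S : Type*}

/-- The Lucas polynomial `L_m(x, -y)` for `m ≥ 1`, with the powers of `y` on the left so that it
can be evaluated at non-commuting operators. -/
def lucas [Ring R] (m : ℕ) (x y : R) : R :=
  ∑ j ∈ range (m / 2 + 1), ((-1) ^ j * lucasCoeff m j : ℤ) • (y ^ j * x ^ (m - 2 * j))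

lemma map_lucas {F : Type*} [Ring R] [Ring S] [FunLike F R S] [RingHomClass F R S] (f : F)
    (m : ℕ) (x y : R) :
    f (lucas m x y) = lucas m (f x) (f y) := by
  simp [lucas, map_sum]

lemma lucas_eq_sum_range [Ring R] {m K : ℕ} (hm : 2 ≤ m) (hK : m / 2 < K) (x y : R) :
    lucas m x y = ∑ j ∈ range K, ((-1) ^ j * lucasCoeff m j : ℤ) • (y ^ j * x ^ (m - 2 * j)) := by
  refine Finset.sum_subset (fun j hj => by simp at hj ⊢; omega) fun j _ hj => ?_
  rw [lucasCoeff_eq_zero hm (by simp at hj; omega)]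
  simp

lemma lucas_add_two [CommRing R] {m : ℕ} (hm : 1 ≤ m) (x y : R) :
    lucas (m + 2) x y = x * lucas (m + 1) x y - y * lucas m x y := by
  rw [lucas, show (m + 2) / 2 + 1 = m / 2 + 1 + 1 by omega,
    lucas_eq_sum_range (m := m + 1) (K := m / 2 + 1 + 1) (by omega) (by omega), lucas]
  simp only [sum_range_succ' _ (m / 2 + 1)]
  rw [mul_add, mul_sum, mul_sum, add_sub_right_comm, ← sum_sub_distrib]
  congr 1
  · refine sum_congr rfl fun i hi => ?_
    have hi : 2 * i ≤ m := by simp at hi; omega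
    rw [lucasCoeff_add_two hm hi]
    rcases hi.lt_or_eq with hlt | heq
    · obtain ⟨d, hd⟩ : ∃ d, m - 2 * i = d + 1 := ⟨m - 2 * i - 1, by omega⟩
      rw [show m + 2 - 2 * (i + 1) = d + 1 by omega, show m + 1 - 2 * (i + 1) = d by omega, hd]
      simp only [zsmul_eq_mul]
      push_cast
      ring
    · rw [lucasCoeff_eq_zero (m := m + 1) (by omega) (by omega),
        show m + 2 - 2 * (i + 1) = 0 by omega, show m + 1 - 2 * (i + 1) = 0 by omega,
        show m - 2 * i = 0 by omega]
      simp only [zsmul_eq_mul]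
      push_cast
      ring
  · simp [lucasCoeff]
    ring

theorem lucas_add_mul [CommRing R] (a b : R) : ∀ {m : ℕ}, 1 ≤ m →
    lucas m (a + b) (a * b) = a ^ m + b ^ m
  | 1, _ => by simp [lucas, lucasCoeff]
  | 2, _ => by simp [lucas, lucasCoeff, sum_range_succ]; ring
  | m + 3, _ => by
    rw [show m + 3 = m + 1 + 2 from rfl, lucas_add_two (by omega),
      lucas_add_mul a b (m := m + 2) (by omega), lucas_add_mul a b (m := m + 1) (by omega)]
    ring

end Lucas

lemma lucas_add_one_self {R : Type*} [Ring R] (e : R) {m : ℕ} (hm : 1 ≤ m) :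
    lucas m (e + 1) e = e ^ m + 1 := by
  have h := congrArg (aeval e) (lucas_add_mul (X : ℤ[X]) 1 hm)
  simpa [map_lucas (aeval e : ℤ[X] →ₐ[ℤ] R)] using h

lemma Cz_succ (N : ℕ) (t : ℤ) : Cz (N + 1) t = Cz N t + Cz N (t - 1) := by
  rcases lt_trichotomy t 0 with h | rfl | h
  · simp only [Cz, if_neg (not_le.mpr h), if_neg (show ¬ (0 : ℤ) ≤ t - 1 by omega), add_zero]
  · simp [Cz]
  · obtain ⟨k, rfl⟩ : ∃ k : ℕ, t = k + 1 := ⟨t.toNat - 1, by omega⟩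
    simp only [Cz, if_pos (by omega : (0 : ℤ) ≤ k + 1), add_sub_cancel_right,
      if_pos (by omega : (0 : ℤ) ≤ k), show ((k : ℤ) + 1).toNat = k + 1 by omega, Int.toNat_natCast,
      Nat.choose_succ_succ', Nat.cast_add]
    ring

lemma support_Cz_subset (N : ℕ) : Function.support (Cz N) ⊆ Set.Icc 0 N := by
  intro t ht
  rw [Function.mem_support, Cz] at ht
  split_ifs at ht with h
  · refine ⟨h, ?_⟩
    by_contra hN
    exact ht (by rw [Nat.choose_eq_zero_of_lt (by omega), Nat.cast_zero])
  · exact absurd rfl ht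

lemma hasFiniteSupport_Cz_sub_mul (N : ℕ) (s : ℤ) (g : ℤ → ℝ) :
    Function.HasFiniteSupport fun t => Cz N (t - s) * g t := by
  refine (Set.finite_Icc s (N + s)).subset fun t ht => ?_
  have := support_Cz_subset N (Function.support_mul_subset_left (fun t => Cz N (t - s)) g ht)
  simp only [Set.mem_Icc] at this ⊢
  omega

lemma hasFiniteSupport_Cz_mul (N : ℕ) (g : ℤ → ℝ) :
    Function.HasFiniteSupport fun t => Cz N t * g t := by
  simpa using hasFiniteSupport_Cz_sub_mul N 0 g

def shift : Module.End ℝ (ℤ → ℝ) := LinearMap.funLeft ℝ ℝ (· + 1)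

lemma shift_pow_apply (k : ℕ) (f : ℤ → ℝ) (c : ℤ) : (shift ^ k) f c = f (c + k) := by
  induction k generalizing f with
  | zero => simp
  | succ k ih =>
    rw [pow_succ, Module.End.mul_apply, ih]
    simp [shift, LinearMap.funLeft_apply, add_assoc]

lemma shift_add_one_pow_apply (N : ℕ) (f : ℤ → ℝ) (c : ℤ) :
    ((shift + 1) ^ N) f c = ∑ᶠ t : ℤ, Cz N t * f (c + t) := by
  induction N generalizing f with
  | zero =>
    rw [finsum_eq_single _ 0 fun t ht => by
      simp only [Cz]
      split_ifs with h0
      · simp [Nat.choose_eq_zero_of_lt (show 0 < t.toNat by omega)]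
      · simp]
    simp [Cz]
  | succ N ih =>
    have hshift : ∑ᶠ t : ℤ, Cz N (t - 1) * f (c + t) = ∑ᶠ t : ℤ, Cz N t * f (c + t + 1) := by
      rw [← finsum_comp_equiv (Equiv.addRight (1 : ℤ))]
      simp [add_assoc]
    simp only [Cz_succ, add_mul]
    rw [finsum_add_distrib (hasFiniteSupport_Cz_mul _ _) (hasFiniteSupport_Cz_sub_mul _ 1 _),
      hshift, ← finsum_add_distrib (hasFiniteSupport_Cz_mul _ _) (hasFiniteSupport_Cz_mul _ _),
      pow_succ, Module.End.mul_apply, ih]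
    refine finsum_congr fun t => ?_
    simp [shift, LinearMap.funLeft_apply]
    ring

noncomputable def altIndicator (m : ℕ) (t : ℤ) : ℝ :=
  if (m : ℤ) ∣ t then (-1) ^ (t / m) else 0

section altIndicator

variable {m : ℕ} (hm : m ≠ 0)
include hm

lemma altIndicator_mul (h : ℤ) : altIndicator m (m * h) = (-1) ^ h := by
  simp [altIndicator, hm]

lemma altIndicator_add_self (t : ℤ) : altIndicator m (t + m) = -altIndicator m t := by
  by_cases hd : (m : ℤ) ∣ t
  · obtain ⟨h, rfl⟩ := hd
    rw [show (m : ℤ) * h + m = m * (h + 1) by ring, altIndicator_mul hm, altIndicator_mul hm,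
      zpow_add_one₀ (by norm_num)]
    ring
  · have hd' : ¬ (m : ℤ) ∣ t + m := fun h' => hd ((dvd_add_left (dvd_refl _)).mp h')
    simp [altIndicator, hd, hd']

lemma finsum_mul_altIndicator (g : ℤ → ℝ) (c : ℤ) :
    ∑ᶠ t : ℤ, g t * altIndicator m (c + t) = ∑ᶠ h : ℤ, g (m * h - c) * (-1) ^ h := by
  have he : Function.Injective fun h : ℤ => (m : ℤ) * h - c := fun a b hab => by
    simpa [hm] using hab
  have hsupp : Function.support (fun t => g t * altIndicator m (c + t)) ⊆
      Set.range fun h : ℤ => (m : ℤ) * h - c := by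
    intro t ht
    obtain ⟨h, hh⟩ : (m : ℤ) ∣ c + t := by
      by_contra hd
      exact ht (by simp [altIndicator, hd])
    exact ⟨h, by linarith⟩
  calc ∑ᶠ t : ℤ, g t * altIndicator m (c + t)
      = ∑ᶠ t ∈ Set.range fun h : ℤ => (m : ℤ) * h - c, g t * altIndicator m (c + t) := by
        rw [← finsum_mem_inter_support, Set.inter_eq_right.mpr hsupp, finsum_mem_support]
    _ = ∑ᶠ h : ℤ, g (m * h - c) * (-1) ^ h := by
        rw [finsum_mem_range he]
        simp [altIndicator_mul hm]

lemma shift_pow_add_one_altIndicator : (shift ^ m + 1) (altIndicator m) = 0 := by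
  ext c
  simp [shift_pow_apply, altIndicator_add_self hm]

lemma shift_pow_add_one_shift_add_one_pow_altIndicator (n : ℕ) :
    (shift ^ m + 1) (((shift + 1) ^ n) (altIndicator m)) = 0 := by
  have hcomm : Commute (shift ^ m + 1) ((shift + 1) ^ n) :=
    (((Commute.refl shift).add_right (Commute.one_right _)).pow_pow m n).add_left
      (Commute.one_left _)
  rw [← Module.End.mul_apply, hcomm.eq, Module.End.mul_apply,
    shift_pow_add_one_altIndicator hm, map_zero]

lemma A_two_eq (l : ℤ) (N : ℕ) :
    A 2 (2 * m) l (-1) N = ((shift + 1) ^ N) (altIndicator m) (-(((N : ℤ) + l).fdiv 2)) := by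
  rw [shift_add_one_pow_apply, finsum_mul_altIndicator hm, A]
  refine finsum_congr fun h => ?_
  push_cast
  rw [Int.fdiv_eq_ediv_of_nonneg _ (by norm_num), Int.fdiv_eq_ediv_of_nonneg _ (by norm_num),
    show (N : ℤ) + 2 * m * h + l = (N + l) + 2 * (m * h) by ring,
    Int.add_mul_ediv_left _ _ (by norm_num)]
  simp [add_comm]

lemma A_two_sub_eq (l : ℤ) (n : ℕ) {j : ℕ} (hj : 2 * j ≤ m) :
    A 2 (2 * m) l (-1) (n + m - 2 * j) =
      ((shift ^ j * (shift + 1) ^ (m - 2 * j)) (((shift + 1) ^ n) (altIndicator m)))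
        (-((((n + m : ℕ) : ℤ) + l).fdiv 2)) := by
  have hc : -((((n + m - 2 * j : ℕ) : ℤ) + l).fdiv 2) = -((((n + m : ℕ) : ℤ) + l).fdiv 2) + j := by
    simp only [Int.fdiv_eq_ediv_of_nonneg _ (show (0 : ℤ) ≤ 2 by norm_num)]
    push_cast [hj]
    omega
  rw [A_two_eq hm, hc, show n + m - 2 * j = m - 2 * j + n by omega, pow_add]
  simp only [Module.End.mul_apply, shift_pow_apply]

end altIndicator

theorem stmt12 (m : ℕ) (hm : 1 ≤ m) (l : ℤ) (n : ℕ) :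
    ∑ j ∈ Finset.range (m / 2 + 1), (-1 : ℝ) ^ j *
        (((m - j).choose j : ℝ) + Cz (m - 1 - j) ((j : ℤ) - 1)) *
        A 2 (2 * m) l (-1) (n + m - 2 * j) = 0 := by
  have hm0 : m ≠ 0 := by omega
  have hterm : ∀ j ∈ range (m / 2 + 1),
      (-1 : ℝ) ^ j * (((m - j).choose j : ℝ) + Cz (m - 1 - j) ((j : ℤ) - 1)) *
        A 2 (2 * m) l (-1) (n + m - 2 * j) =
      ((((-1) ^ j * lucasCoeff m j : ℤ) • (shift ^ j * (shift + 1) ^ (m - 2 * j)))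
        (((shift + 1) ^ n) (altIndicator m))) (-((((n + m : ℕ) : ℤ) + l).fdiv 2)) := by
    intro j hj
    rw [choose_add_Cz_eq_lucasCoeff, A_two_sub_eq hm0 l n (by simp at hj; omega), LinearMap.smul_apply,
      Pi.smul_apply, zsmul_eq_mul]
    push_cast
    ring
  rw [sum_congr rfl hterm, ← Finset.sum_apply, ← LinearMap.sum_apply, ← lucas,
    lucas_add_one_self _ hm, shift_pow_add_one_shift_add_one_pow_altIndicator hm0, Pi.zero_apply]
end

section
/- For every natural number n and every real number x, L_{2n+1}(x, −1) + 2 = (x + 2)·(F_{n+1}(x, −1) − F_n(x, −1))². -/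
/-- The Lucas polynomials: `L_0(x,s) = 2`, `L_1(x,s) = x`,
`L_n(x,s) = x·L_{n-1}(x,s) + s·L_{n-2}(x,s)`. -/
def LucasPoly : ℕ → ℝ → ℝ → ℝ
  | 0, _, _ => 2
  | 1, x, _ => x
  | n + 2, x, s => x * LucasPoly (n + 1) x s + s * LucasPoly n x s

/-- The Fibonacci polynomials: `F_0(x,s) = 0`, `F_1(x,s) = 1`,
`F_n(x,s) = x·F_{n-1}(x,s) + s·F_{n-2}(x,s)`. -/
def FibPoly : ℕ → ℝ → ℝ → ℝ
  | 0, _, _ => 0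
  | 1, _, _ => 1
  | n + 2, x, s => x * FibPoly (n + 1) x s + s * FibPoly n x s

lemma fib_rec (n : ℕ) (x s : ℝ) :
    FibPoly (n + 2) x s = x * FibPoly (n + 1) x s + s * FibPoly n x s := rfl

lemma lucas_rec (n : ℕ) (x s : ℝ) :
    LucasPoly (n + 2) x s = x * LucasPoly (n + 1) x s + s * LucasPoly n x s := rfl

lemma cassini (n : ℕ) (x : ℝ) :
    (FibPoly (n + 1) x (-1)) ^ 2 - x * FibPoly (n + 1) x (-1) * FibPoly n x (-1)
      + (FibPoly n x (-1)) ^ 2 = 1 := by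
  induction n with
  | zero => simp [FibPoly]
  | succ k ih =>
    rw [show k + 1 + 1 = k + 2 from rfl, fib_rec]
    linear_combination ih

lemma fib_double (n : ℕ) (x : ℝ) :
    FibPoly (2 * n + 1) x (-1)
        = (FibPoly (n + 1) x (-1)) ^ 2 - (FibPoly n x (-1)) ^ 2
      ∧ FibPoly (2 * n) x (-1)
        = FibPoly n x (-1) * (2 * FibPoly (n + 1) x (-1) - x * FibPoly n x (-1)) := by
  induction n with
  | zero => simp [FibPoly]
  | succ k ih =>
    obtain ⟨h1, h2⟩ := ih
    have e1 : 2 * (k + 1) + 1 = (2 * k + 1) + 2 := by ring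
    have e2 : 2 * (k + 1) = 2 * k + 2 := by ring
    rw [e1, e2, fib_rec, fib_rec, show k + 1 + 1 = k + 2 from rfl, fib_rec]
    constructor
    · linear_combination (x ^ 2 - 1) * h1 - x * h2
    · linear_combination x * h1 - h2

lemma lucas_fib (n : ℕ) (x : ℝ) :
    LucasPoly (n + 1) x (-1) = x * FibPoly (n + 1) x (-1) - 2 * FibPoly n x (-1)
      ∧ LucasPoly (n + 2) x (-1) = x * FibPoly (n + 2) x (-1) - 2 * FibPoly (n + 1) x (-1) := by
  induction n with
  | zero =>
    refine ⟨by norm_num [FibPoly, LucasPoly], ?_⟩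
    rw [lucas_rec, fib_rec]
    norm_num [FibPoly, LucasPoly]
    ring
  | succ k ih =>
    obtain ⟨h1, h2⟩ := ih
    refine ⟨h2, ?_⟩
    rw [lucas_rec, fib_rec (k + 1)]
    linear_combination x * h2 - h1 + 2 * (fib_rec k x (-1))

theorem stmt17 (n : ℕ) (x : ℝ) :
    LucasPoly (2 * n + 1) x (-1) + 2
      = (x + 2) * (FibPoly (n + 1) x (-1) - FibPoly n x (-1)) ^ 2 := by
  obtain ⟨hd1, hd2⟩ := fib_double n x
  have hc := cassini n x
  have hl := (lucas_fib (2 * n) x).1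
  rw [hl, hd1, hd2]
  linear_combination -2 * hc
end

section
/- For every natural number m and every real number x, (L_{m+1}(x, −1) − L_m(x, −1))² = (x − 2)·(L_{2m+1}(x, −1) − 2). -/
lemma LucasPoly_rec (n : ℕ) (x : ℝ) :
    LucasPoly (n + 2) x (-1) = x * LucasPoly (n + 1) x (-1) - LucasPoly n x (-1) := by
  show x * LucasPoly (n + 1) x (-1) + (-1) * LucasPoly n x (-1) = _
  ring

lemma LucasPoly_mul (x : ℝ) :
    ∀ n k : ℕ, LucasPoly (n + k) x (-1) * LucasPoly n x (-1)
      = LucasPoly (2 * n + k) x (-1) + LucasPoly k x (-1) := by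
  intro n
  induction n using Nat.twoStepInduction with
  | zero => intro k; simp [LucasPoly]; ring
  | one =>
    intro k
    rw [show 1 + k = k + 1 from by ring, show 2 * 1 + k = k + 2 from by ring,
      show LucasPoly 1 x (-1) = x from rfl, LucasPoly_rec k x]
    ring
  | more n ih0 ih1 =>
    intro k
    have h1 := ih1 (k + 1)
    have h0 := ih0 (k + 2)
    rw [show n + 1 + (k + 1) = n + 2 + k from by ring,
        show 2 * (n + 1) + (k + 1) = 2 * n + k + 3 from by ring] at h1
    rw [show n + (k + 2) = n + 2 + k from by ring,
        show 2 * n + (k + 2) = 2 * n + k + 2 from by ring] at h0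
    have hA := LucasPoly_rec (2 * n + k + 2) x
    have hB := LucasPoly_rec k x
    rw [show 2 * n + k + 2 + 2 = 2 * n + k + 4 from by ring,
        show 2 * n + k + 2 + 1 = 2 * n + k + 3 from by ring] at hA
    rw [LucasPoly_rec n x, show 2 * (n + 2) + k = 2 * n + k + 4 from by ring]
    linear_combination x * h1 - h0 - hA - hB

theorem stmt19 (m : ℕ) (x : ℝ) :
    (LucasPoly (m + 1) x (-1) - LucasPoly m x (-1)) ^ 2
      = (x - 2) * (LucasPoly (2 * m + 1) x (-1) - 2) := by
  have h0 := LucasPoly_mul x m 0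
  have h1 := LucasPoly_mul x m 1
  have h2 := LucasPoly_mul x (m + 1) 0
  have e0 : m + 0 = m := by ring
  have e1 : m + 1 + 0 = m + 1 := by ring
  have e2 : 2 * (m + 1) + 0 = 2 * m + 2 := by ring
  have e3 : 2 * m + 0 = 2 * m := by ring
  rw [e0, e3] at h0
  rw [e1, e2] at h2
  have hr := LucasPoly_rec (2 * m) x
  have eR : 2 * m + 1 + 1 = 2 * m + 2 := by ring
  rw [show (2 : ℕ) * m + 2 = 2 * m + 1 + 1 from rfl] at h2 hr
  simp only [LucasPoly] at h0 h1 h2 ⊢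
  nlinarith [h0, h1, h2, hr]
end
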